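/- arXiv:2404.09332 — 8 statements merged into one kernel-verified Lean document; each statement's English description precedes it below -/
import Mathlib

section
/- Let P, Q ∈ ℂ[X] be nonzero coprime polynomials (so P and Q have no common zero in ℂ) and set f := W(P,Q). Then the function ψ_{P,Q}(z) := log 8 − 2·log(|P(z)|² + |Q(z)|²) is a smooth function on ℝ² ≅ ℂ and satisfies the generalized Liouville equation −Δψ_{P,Q}(z) = |f(z)|²·e^{ψ_{P,Q}(z)} at every point z ∈ ℝ². -/
open MeasureTheory Polynomial

/-- The Laplacian on ℝ² ≅ ℂ: Δψ = ∂²ψ/∂x₁² + ∂²ψ/∂x₂², where ∂₁, ∂₂ are the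
directional derivatives along `1` and `Complex.I`. -/
noncomputable def lap (ψ : ℂ → ℝ) (z : ℂ) : ℝ :=
  fderiv ℝ (fun w => fderiv ℝ ψ w 1) z 1 +
  fderiv ℝ (fun w => fderiv ℝ ψ w Complex.I) z Complex.I

/-- The Wronskian W(P,Q) = P'·Q − P·Q'. -/
noncomputable def Wr (P Q : Polynomial ℂ) : Polynomial ℂ :=
  P.derivative * Q - P * Q.derivative

section Aux
open Complex

noncomputable def mA (a : ℂ) : ℂ →L[ℝ] ℂ :=
  (ContinuousLinearMap.mul ℂ ℂ a).restrictScalars ℝ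

@[simp] lemma mA_apply (a v : ℂ) : mA a v = a * v := rfl

lemma poly_hasFDerivAt (R : Polynomial ℂ) (z : ℂ) :
    HasFDerivAt (fun w => R.eval w) (mA (R.derivative.eval z)) z := by
  have h := (R.hasDerivAt z).hasFDerivAt.restrictScalars ℝ
  refine h.congr_fderiv ?_
  ext v
  simp [mA, mul_comm]

lemma normSq_poly_hasFDerivAt (R : Polynomial ℂ) (z : ℂ) :
    HasFDerivAt (fun w => Complex.normSq (R.eval w))
      ((2:ℝ) • (Complex.reCLM.comp (mA ((starRingEnd ℂ) (R.eval z) * R.derivative.eval z)))) z := by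
  have h := poly_hasFDerivAt R z
  have hre : HasFDerivAt (fun w => (R.eval w).re)
      (Complex.reCLM.comp (mA (R.derivative.eval z))) z :=
    (Complex.reCLM.hasFDerivAt).comp z h
  have him : HasFDerivAt (fun w => (R.eval w).im)
      (Complex.imCLM.comp (mA (R.derivative.eval z))) z :=
    (Complex.imCLM.hasFDerivAt).comp z h
  have h2 := (hre.mul hre).add (him.mul him)
  have hfun : (fun w => Complex.normSq (R.eval w)) =
      fun w => (R.eval w).re * (R.eval w).re + (R.eval w).im * (R.eval w).im := by
    funext w; simp [Complex.normSq_apply]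
  rw [hfun]
  refine h2.congr_fderiv ?_
  ext v
  simp [mA, Complex.mul_re, Complex.mul_im, smul_eq_mul]
  ring

noncomputable def uu (P Q : Polynomial ℂ) (z : ℂ) : ℝ :=
  Complex.normSq (P.eval z) + Complex.normSq (Q.eval z)

noncomputable def ss (P Q : Polynomial ℂ) (z : ℂ) : ℂ :=
  (starRingEnd ℂ) (P.eval z) * P.derivative.eval z +
  (starRingEnd ℂ) (Q.eval z) * Q.derivative.eval z

lemma uu_pos (P Q : Polynomial ℂ) (hco : IsCoprime P Q) (z : ℂ) : 0 < uu P Q z := by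
  rcases hco with ⟨A, B, hAB⟩
  have h1 : A.eval z * P.eval z + B.eval z * Q.eval z = 1 := by
    have := congrArg (Polynomial.eval z) hAB
    simpa using this
  rcases ne_or_eq (P.eval z) 0 with h | h
  · have h2 := Complex.normSq_pos.mpr h
    have h3 := Complex.normSq_nonneg (Q.eval z)
    unfold uu; linarith
  · have hq : Q.eval z ≠ 0 := by
      intro hq; rw [h, hq] at h1; simp at h1
    have h2 := Complex.normSq_pos.mpr hq
    have h3 := Complex.normSq_nonneg (P.eval z)
    unfold uu; linarith

lemma uu_hasFDerivAt (P Q : Polynomial ℂ) (z : ℂ) :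
    HasFDerivAt (uu P Q) ((2:ℝ) • (Complex.reCLM.comp (mA (ss P Q z)))) z := by
  have h := (normSq_poly_hasFDerivAt P z).add (normSq_poly_hasFDerivAt Q z)
  refine h.congr_fderiv ?_
  ext v
  simp [mA, ss, Complex.add_re, Complex.add_im, Complex.mul_re, Complex.mul_im, smul_eq_mul]

lemma psi_hasFDerivAt (P Q : Polynomial ℂ) (hco : IsCoprime P Q) (z : ℂ) :
    HasFDerivAt (fun w => Real.log 8 - 2 * Real.log (uu P Q w))
      (((-4) * (uu P Q z)⁻¹) • (Complex.reCLM.comp (mA (ss P Q z)))) z := by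
  have hne := (uu_pos P Q hco z).ne'
  have h1 := ((uu_hasFDerivAt P Q z).log hne).const_mul (2:ℝ)
  have h2 := h1.const_sub (Real.log 8)
  refine h2.congr_fderiv ?_
  ext v
  simp [mA, smul_eq_mul]
  ring

lemma fderiv_psi_apply (P Q : Polynomial ℂ) (hco : IsCoprime P Q) (w v : ℂ) :
    fderiv ℝ (fun w => Real.log 8 - 2 * Real.log (uu P Q w)) w v =
      (-4 * (uu P Q w)⁻¹) * (ss P Q w * v).re := by
  rw [(psi_hasFDerivAt P Q hco w).fderiv]
  simp [mA, smul_eq_mul]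

noncomputable def SS (P Q : Polynomial ℂ) (z : ℂ) : ℂ →L[ℝ] ℂ :=
  ((starRingEnd ℂ) (P.eval z) • mA (P.derivative.derivative.eval z) +
    (P.derivative.eval z) • ((Complex.conjCLE : ℂ →L[ℝ] ℂ).comp (mA (P.derivative.eval z)))) +
  ((starRingEnd ℂ) (Q.eval z) • mA (Q.derivative.derivative.eval z) +
    (Q.derivative.eval z) • ((Complex.conjCLE : ℂ →L[ℝ] ℂ).comp (mA (Q.derivative.eval z))))

lemma conj_poly_hasFDerivAt (R : Polynomial ℂ) (z : ℂ) :
    HasFDerivAt (fun w => (starRingEnd ℂ) (R.eval w))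
      ((Complex.conjCLE : ℂ →L[ℝ] ℂ).comp (mA (R.derivative.eval z))) z := by
  exact ((Complex.conjCLE : ℂ →L[ℝ] ℂ).hasFDerivAt).comp z (poly_hasFDerivAt R z)

lemma ss_hasFDerivAt (P Q : Polynomial ℂ) (z : ℂ) :
    HasFDerivAt (fun w => ss P Q w) (SS P Q z) z := by
  exact ((conj_poly_hasFDerivAt P z).mul (poly_hasFDerivAt P.derivative z)).add
    ((conj_poly_hasFDerivAt Q z).mul (poly_hasFDerivAt Q.derivative z))

lemma G_hasFDerivAt (P Q : Polynomial ℂ) (hco : IsCoprime P Q) (v z : ℂ) :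
    HasFDerivAt (fun w => (-4 * (uu P Q w)⁻¹) * (ss P Q w * v).re)
      ((-4 * (uu P Q z)⁻¹) • (Complex.reCLM.comp (v • SS P Q z)) +
        ((ss P Q z * v).re) •
          ((-4 : ℝ) • ((ContinuousLinearMap.smulRight (1 : ℝ →L[ℝ] ℝ) (-((uu P Q z) ^ 2)⁻¹)).comp
            ((2:ℝ) • (Complex.reCLM.comp (mA (ss P Q z)))))) ) z := by
  have hne := (uu_pos P Q hco z).ne'
  have hA : HasFDerivAt (fun w => -4 * (uu P Q w)⁻¹)
      ((-4 : ℝ) • ((ContinuousLinearMap.smulRight (1 : ℝ →L[ℝ] ℝ) (-((uu P Q z) ^ 2)⁻¹)).comp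
        ((2:ℝ) • (Complex.reCLM.comp (mA (ss P Q z)))))) z := by
    have hinv : HasFDerivAt (fun w => (uu P Q w)⁻¹)
        ((ContinuousLinearMap.smulRight (1 : ℝ →L[ℝ] ℝ) (-((uu P Q z) ^ 2)⁻¹)).comp
          ((2:ℝ) • (Complex.reCLM.comp (mA (ss P Q z))))) z := by
      exact (hasFDerivAt_inv hne).comp z (uu_hasFDerivAt P Q z)
    exact hinv.const_mul (-4 : ℝ)
  have hB : HasFDerivAt (fun w => (ss P Q w * v).re)
      (Complex.reCLM.comp (v • SS P Q z)) z := by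
    exact (Complex.reCLM.hasFDerivAt).comp z ((ss_hasFDerivAt P Q z).mul_const v)
  exact hA.mul hB

lemma contDiff_polyeval (R : Polynomial ℂ) : ContDiff ℝ (⊤ : ℕ∞) fun z : ℂ => R.eval z := by
  have h : ContDiff ℂ ⊤ fun z : ℂ => R.eval z := by
    induction R using Polynomial.induction_on' with
    | add p q hp hq => simp only [eval_add]; exact hp.add hq
    | monomial n a => simp only [eval_monomial]; exact contDiff_const.mul (contDiff_id.pow n)
  exact (h.restrict_scalars ℝ).of_le le_top

lemma contDiff_normSq_poly (R : Polynomial ℂ) :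
    ContDiff ℝ (⊤ : ℕ∞) fun z : ℂ => Complex.normSq (R.eval z) := by
  have h := contDiff_polyeval R
  have hre := Complex.reCLM.contDiff.comp h
  have him := Complex.imCLM.contDiff.comp h
  have hfun : (fun z : ℂ => Complex.normSq (R.eval z)) =
      fun z => (R.eval z).re * (R.eval z).re + (R.eval z).im * (R.eval z).im := by
    funext w; simp [Complex.normSq_apply]
  rw [hfun]
  exact (hre.mul hre).add (him.mul him)


end Aux

/-- For nonzero coprime complex polynomials P, Q and f := W(P,Q),
the function ψ_{P,Q} := log 8 − 2 log(|P|² + |Q|²) is smooth on ℝ² ≅ ℂ and satisfies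
−Δψ_{P,Q} = |f|² e^{ψ_{P,Q}} everywhere. -/
theorem stmt0 (P Q : Polynomial ℂ) (hP : P ≠ 0) (hQ : Q ≠ 0) (hco : IsCoprime P Q)
    (f : Polynomial ℂ) (hf : f = Wr P Q)
    (ψ : ℂ → ℝ)
    (hψ : ψ = fun z => Real.log 8 -
      2 * Real.log (‖P.eval z‖ ^ 2 + ‖Q.eval z‖ ^ 2)) :
    ContDiff ℝ (⊤ : ℕ∞) ψ ∧
    ∀ z : ℂ, -lap ψ z = ‖f.eval z‖ ^ 2 * Real.exp (ψ z) := by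
  have hψu : ψ = fun z => Real.log 8 - 2 * Real.log (uu P Q z) := by
    rw [hψ]; funext w; simp [Complex.sq_norm, uu]
  constructor
  · rw [hψu]
    have hu_cd : ContDiff ℝ (⊤ : ℕ∞) fun z : ℂ => uu P Q z :=
      (contDiff_normSq_poly P).add (contDiff_normSq_poly Q)
    rw [contDiff_iff_contDiffAt]
    intro x
    have hlog : ContDiffAt ℝ (⊤ : ℕ∞) (fun z : ℂ => Real.log (uu P Q z)) x :=
      (hu_cd.contDiffAt).log (uu_pos P Q hco x).ne'
    exact contDiffAt_const.sub (contDiffAt_const.mul hlog)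
  · intro z
    have hup := uu_pos P Q hco z
    have hne := hup.ne'
    have hinner : ∀ v : ℂ, (fun w => fderiv ℝ ψ w v) =
        fun w => (-4 * (uu P Q w)⁻¹) * (ss P Q w * v).re := by
      intro v; funext w; rw [hψu]; exact fderiv_psi_apply P Q hco w v
    have hexp : Real.exp (ψ z) = 8 / (uu P Q z) ^ 2 := by
      rw [hψu]
      simp only
      rw [Real.exp_sub, Real.exp_log (by norm_num : (0:ℝ) < 8),
        show (2:ℝ) * Real.log (uu P Q z) = Real.log ((uu P Q z) ^ 2) by
          rw [Real.log_pow]; push_cast; ring,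
        Real.exp_log (pow_pos hup 2)]
    rw [hexp, Complex.sq_norm, hf]
    unfold lap
    rw [hinner 1, hinner Complex.I]
    rw [(G_hasFDerivAt P Q hco 1 z).fderiv, (G_hasFDerivAt P Q hco Complex.I z).fderiv]
    have hne' : (P.eval z).re * (P.eval z).re + (P.eval z).im * (P.eval z).im +
        ((Q.eval z).re * (Q.eval z).re + (Q.eval z).im * (Q.eval z).im) ≠ 0 := by
      simpa [uu, Complex.normSq_apply] using hne
    simp only [Wr, eval_sub, eval_mul, SS, mA_apply, ContinuousLinearMap.add_apply,
      ContinuousLinearMap.smul_apply, ContinuousLinearMap.comp_apply,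
      ContinuousLinearMap.smulRight_apply, ContinuousLinearMap.one_apply,
      ContinuousLinearMap.coe_coe, ContinuousLinearEquiv.coe_coe, Complex.conjCLE_apply, Complex.reCLM_apply,
      smul_eq_mul, uu, ss, Complex.normSq_apply, Complex.mul_re, Complex.mul_im,
      Complex.add_re, Complex.add_im, Complex.sub_re, Complex.sub_im,
      Complex.conj_re, Complex.conj_im, Complex.I_re, Complex.I_im,
      Complex.one_re, Complex.one_im]
    field_simp
    ring
end

section
/- Let P, Q ∈ ℂ[X] be nonzero coprime polynomials. Then the function z ↦ |W(P,Q)(z)|² / (|P(z)|² + |Q(z)|²)² is Lebesgue integrable on ℝ² ≅ ℂ and ∫_{ℝ²} |W(P,Q)(z)|² / (|P(z)|² + |Q(z)|²)² dz = π · max(deg P, deg Q). Equivalently, with f := W(P,Q) and ψ_{P,Q} := log 8 − 2·log(|P|² + |Q|²), one has ∫_{ℝ²} |f|²·e^{ψ_{P,Q}} = 8π · max(deg P, deg Q). -/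
/-!
The integrand is the pull-back of the spherical area density `ρ w = 1 / (1 + ‖w‖²)²` under the
rational map `f = P / Q`: away from the finitely many zeros of `Q · W(P,Q)` one has
`f' = W(P,Q) / Q²` and `|f'|² · ρ ∘ f = |W(P,Q)|² / (|P|² + |Q|²)²`. The change of variables
formula, applied on countably many pieces on which `f` is injective, turns the integral into
`∫ ρ(w) · #f⁻¹(w) dw`. For all but finitely many `w` the fibre `f⁻¹(w)` is the zero set of
`P - w Q`, a polynomial of degree `max (deg P) (deg Q)` whose roots are simple, because
`W(P,Q) = Q · (P - w Q)'` at each of them. Hence `#f⁻¹(w) = max (deg P) (deg Q)` almost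
everywhere, and `∫ ρ = π`.
-/

open MeasureTheory Polynomial

open Set Filter Topology Function
open scoped ENNReal

theorem MeasureTheory.ae_le_cofinite {α : Type*} [MeasurableSpace α] (μ : Measure α)
    [NullSingletonClass μ] : ae μ ≤ cofinite :=
  fun _ hs => mem_ae_iff.2 (Set.Finite.measure_zero hs μ)

theorem integrable_and_integral_eq_of_lintegral_ofReal_eq {α : Type*} [MeasurableSpace α]
    {μ : Measure α} {f : α → ℝ} (hf : AEStronglyMeasurable f μ) (hf0 : 0 ≤ᵐ[μ] f) {c : ℝ}
    (hc : 0 ≤ c) (h : ∫⁻ x, ENNReal.ofReal (f x) ∂μ = ENNReal.ofReal c) :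
    Integrable f μ ∧ ∫ x, f x ∂μ = c := by
  refine ⟨⟨hf, ?_⟩, ?_⟩
  · rw [hasFiniteIntegral_iff_ofReal hf0, h]
    exact ENNReal.ofReal_lt_top
  · rw [integral_eq_lintegral_of_nonneg_ae hf0 hf, h, ENNReal.toReal_ofReal hc]

theorem exists_measurable_partition_injOn {α β : Type*} [TopologicalSpace α]
    [SecondCountableTopology α] [MeasurableSpace α] [OpensMeasurableSpace α] {f : α → β}
    {s : Set α} (hs : MeasurableSet s) (hf : ∀ x ∈ s, ∃ U ∈ 𝓝 x, InjOn f U) :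
    ∃ t : ℕ → Set α, (∀ n, MeasurableSet (t n)) ∧ Pairwise (Disjoint on t) ∧
      ⋃ n, t n = s ∧ ∀ n, InjOn f (t n) := by
  choose! U hU hUinj using hf
  obtain ⟨c, hcs, hc, hsc⟩ := TopologicalSpace.countable_cover_nhdsWithin
    fun x hx => mem_nhdsWithin_of_mem_nhds (interior_mem_nhds.2 (hU x hx))
  -- `∅` only makes the family nonempty, so that it can be enumerated by `ℕ`.
  obtain ⟨u, hu⟩ := ((hc.image fun x => interior (U x)).insert ∅).exists_eq_range
    (insert_nonempty _ _)
  have hu_mem : ∀ n, u n = ∅ ∨ ∃ x ∈ c, interior (U x) = u n := fun n => by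
    have h : u n ∈ range u := mem_range_self n
    rwa [← hu, mem_insert_iff, mem_image] at h
  refine ⟨disjointed fun n => u n ∩ s, ?_, disjoint_disjointed _, ?_, fun n => ?_⟩
  · refine MeasurableSet.disjointed fun n => ?_
    rcases hu_mem n with h | ⟨x, -, h⟩
    · simp [h]
    · exact (h ▸ isOpen_interior).measurableSet.inter hs
  · rw [iUnion_disjointed, ← iUnion_inter, ← sUnion_range, ← hu, sUnion_insert,
      empty_union, sUnion_image]
    exact inter_eq_right.2 hsc
  · refine InjOn.mono ((disjointed_subset _ n).trans inter_subset_left) ?_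
    rcases hu_mem n with h | ⟨x, hx, h⟩
    · simp [h]
    · exact h ▸ (hUinj x (hcs hx)).mono interior_subset

theorem tsum_indicator_image_eq_encard {α β : Type*} [MeasurableSpace α]
    [MeasurableSingletonClass α] {f : α → β} {t : ℕ → Set α} (ht : Pairwise (Disjoint on t))
    (hf : ∀ n, InjOn f (t n)) (y : β) :
    ∑' n, (f '' t n).indicator (1 : β → ℝ≥0∞) y = ((⋃ n, t n) ∩ f ⁻¹' {y}).encard := by
  have hsub : ∀ n, (t n ∩ f ⁻¹' {y}).Subsingleton := fun n x hx x' hx' =>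
    hf n hx.1 hx'.1 (hx.2.trans hx'.2.symm)
  have hcount : ∀ n, (f '' t n).indicator 1 y = Measure.count (t n ∩ f ⁻¹' {y}) := by
    intro n
    by_cases hy : y ∈ f '' t n
    · obtain ⟨x, hx, rfl⟩ := hy
      rw [indicator_of_mem (mem_image_of_mem f hx), (hsub n).eq_singleton_of_mem ⟨hx, rfl⟩,
        Measure.count_singleton, Pi.one_apply]
    · rw [indicator_of_notMem hy, eq_comm, Measure.count_eq_zero_iff, eq_empty_iff_forall_notMem]
      exact fun x hx => hy ⟨x, hx.1, hx.2⟩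
  rw [iUnion_inter, ← Measure.count_apply (MeasurableSet.iUnion fun n => (hsub n).measurableSet),
    measure_iUnion (fun m n hmn => (ht hmn).mono inter_subset_left inter_subset_left)
      fun n => (hsub n).measurableSet]
  exact tsum_congr hcount

section AreaFormula

variable {E : Type*} [NormedAddCommGroup E] [NormedSpace ℝ E] [FiniteDimensional ℝ E]
  [MeasurableSpace E] [BorelSpace E] (μ : Measure E) [μ.IsAddHaarMeasure]

theorem lintegral_abs_det_fderiv_mul_eq_lintegral_encard_mul {s : Set E} (hs : MeasurableSet s)
    {f : E → E} {f' : E → E →L[ℝ] E} (hf' : ∀ x ∈ s, HasFDerivWithinAt f (f' x) s x)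
    (hloc : ∀ x ∈ s, ∃ U ∈ 𝓝 x, InjOn f U) {g : E → ℝ≥0∞} (hg : Measurable g) :
    ∫⁻ x in s, ENNReal.ofReal |(f' x).det| * g (f x) ∂μ =
      ∫⁻ y, (s ∩ f ⁻¹' {y}).encard * g y ∂μ := by
  obtain ⟨t, htm, htd, hts, htinj⟩ := exists_measurable_partition_injOn hs hloc
  have hf't : ∀ n, ∀ x ∈ t n, HasFDerivWithinAt f (f' x) (t n) x := fun n x hx =>
    (hf' x (hts ▸ mem_iUnion_of_mem n hx)).mono (hts ▸ subset_iUnion t n)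
  have himg : ∀ n, MeasurableSet (f '' t n) := fun n =>
    measurable_image_of_fderivWithin (htm n) (hf't n) (htinj n)
  calc ∫⁻ x in s, ENNReal.ofReal |(f' x).det| * g (f x) ∂μ
      = ∑' n, ∫⁻ x in t n, ENNReal.ofReal |(f' x).det| * g (f x) ∂μ := by
        rw [← hts]; exact lintegral_iUnion htm htd _
    _ = ∑' n, ∫⁻ y, (f '' t n).indicator g y ∂μ := by
        congr with n
        rw [lintegral_indicator (himg n),
          lintegral_image_eq_lintegral_abs_det_fderiv_mul μ (htm n) (hf't n) (htinj n)]
    _ = ∫⁻ y, ∑' n, (f '' t n).indicator g y ∂μ :=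
        (lintegral_tsum fun n => (hg.indicator (himg n)).aemeasurable).symm
    _ = ∫⁻ y, (s ∩ f ⁻¹' {y}).encard * g y ∂μ := by
        congr with y
        rw [← hts, ← tsum_indicator_image_eq_encard htd htinj, ← ENNReal.tsum_mul_right]
        congr with n
        by_cases hy : y ∈ f '' t n <;> simp [hy]

end AreaFormula

theorem HasStrictDerivAt.exists_mem_nhds_injOn {𝕜 : Type*} [NontriviallyNormedField 𝕜]
    [CompleteSpace 𝕜] {f : 𝕜 → 𝕜} {f' a : 𝕜} (hf : HasStrictDerivAt f f' a) (hf' : f' ≠ 0) :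
    ∃ U ∈ 𝓝 a, InjOn f U :=
  ⟨_, hf.eventually_left_inverse hf', fun _ hx _ hy hxy => hx.symm.trans (hxy ▸ hy)⟩

theorem Complex.det_restrictScalars_toSpanSingleton (c : ℂ) :
    ((ContinuousLinearMap.toSpanSingleton ℂ c).restrictScalars ℝ).det = Complex.normSq c := by
  simp [ContinuousLinearMap.det, LinearMap.det_restrictScalars, Algebra.norm_complex_eq]

theorem Complex.lintegral_normSq_deriv_mul_eq_lintegral_encard_mul {s : Set ℂ}
    (hs : MeasurableSet s) {f f' : ℂ → ℂ} (hf : ∀ z ∈ s, HasStrictDerivAt f (f' z) z)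
    (hf' : ∀ z ∈ s, f' z ≠ 0) {g : ℂ → ℝ≥0∞} (hg : Measurable g) :
    ∫⁻ z in s, ENNReal.ofReal (Complex.normSq (f' z)) * g (f z) =
      ∫⁻ w, (s ∩ f ⁻¹' {w}).encard * g w := by
  have := lintegral_abs_det_fderiv_mul_eq_lintegral_encard_mul volume hs
    (fun z hz => ((hf z hz).hasDerivAt.hasFDerivAt.restrictScalars ℝ).hasFDerivWithinAt)
    (fun z hz => (hf z hz).exists_mem_nhds_injOn (hf' z hz)) hg
  simpa only [Complex.det_restrictScalars_toSpanSingleton,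
    abs_of_nonneg (Complex.normSq_nonneg _)] using this

theorem lintegral_Ioi_div_one_add_sq_sq :
    ∫⁻ r in Ioi (0 : ℝ), ENNReal.ofReal (r / (1 + r ^ 2) ^ 2) = ENNReal.ofReal (1 / 2) := by
  have hderiv : ∀ r ∈ Ici (0 : ℝ),
      HasDerivAt (fun r : ℝ => -(2 * (1 + r ^ 2))⁻¹) (r / (1 + r ^ 2) ^ 2) r := fun r _ => by
    have h : HasDerivAt (fun r : ℝ => 2 * (1 + r ^ 2)) (2 * (2 * r)) r := by
      simpa using ((hasDerivAt_pow 2 r).const_add 1).const_mul 2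
    refine (h.inv (by positivity)).neg.congr_deriv ?_
    field_simp
  have hnonneg : ∀ r ∈ Ioi (0 : ℝ), 0 ≤ r / (1 + r ^ 2) ^ 2 := fun r hr => by
    have : 0 < r := hr
    positivity
  have hlim : Tendsto (fun r : ℝ => -(2 * (1 + r ^ 2))⁻¹) atTop (𝓝 0) := by
    simpa using (tendsto_inv_atTop_zero.comp <| (tendsto_atTop_add_const_left _ 1
      (tendsto_pow_atTop (α := ℝ) two_ne_zero)).const_mul_atTop (by norm_num : (0 : ℝ) < 2)).neg
  rw [← ofReal_integral_eq_lintegral_ofReal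
      (integrableOn_Ioi_deriv_of_nonneg' hderiv hnonneg hlim)
      (ae_restrict_of_forall_mem measurableSet_Ioi hnonneg),
    integral_Ioi_of_hasDerivAt_of_nonneg' hderiv hnonneg hlim]
  norm_num

noncomputable def sphericalDensity (w : ℂ) : ℝ := 1 / (1 + ‖w‖ ^ 2) ^ 2

theorem continuous_sphericalDensity : Continuous sphericalDensity :=
  continuous_const.div (by fun_prop) fun w => by positivity

theorem lintegral_sphericalDensity :
    ∫⁻ w : ℂ, ENNReal.ofReal (sphericalDensity w) = ENNReal.ofReal Real.pi := by
  rw [← Complex.lintegral_comp_polarCoord_symm, polarCoord_target]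
  have hpolar : ∀ p ∈ Ioi (0 : ℝ) ×ˢ Ioo (-Real.pi) Real.pi,
      ENNReal.ofReal p.1 • ENNReal.ofReal (sphericalDensity (Complex.polarCoord.symm p)) =
        ENNReal.ofReal (p.1 / (1 + p.1 ^ 2) ^ 2) * 1 := fun p hp => by
    rw [smul_eq_mul, mul_one, ← ENNReal.ofReal_mul (le_of_lt hp.1), sphericalDensity,
      Complex.norm_polarCoord_symm, sq_abs, mul_one_div]
  rw [setLIntegral_congr_fun (measurableSet_Ioi.prod measurableSet_Ioo) hpolar,
    Measure.volume_eq_prod, ← Measure.prod_restrict,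
    lintegral_prod_mul (f := fun r => ENNReal.ofReal (r / (1 + r ^ 2) ^ 2)) (g := fun _ => 1)
      (by fun_prop) (by fun_prop),
    lintegral_Ioi_div_one_add_sq_sq, setLIntegral_const, one_mul, Real.volume_Ioo,
    ← ENNReal.ofReal_mul (by norm_num)]
  congr 1
  ring

theorem normSq_div_sq_mul_sphericalDensity_div {a b c : ℂ} (hb : b ≠ 0) :
    Complex.normSq (c / b ^ 2) * sphericalDensity (a / b) =
      ‖c‖ ^ 2 / (‖a‖ ^ 2 + ‖b‖ ^ 2) ^ 2 := by
  have hb' : ‖b‖ ≠ 0 := norm_ne_zero_iff.2 hb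
  rw [sphericalDensity, Complex.normSq_eq_norm_sq, norm_div, norm_div, norm_pow]
  field_simp
  ring

theorem Polynomial.eval_ne_zero_or_eval_ne_zero_of_isCoprime {R : Type*} [CommRing R]
    [Nontrivial R] {P Q : R[X]} (hco : IsCoprime P Q) (z : R) : P.eval z ≠ 0 ∨ Q.eval z ≠ 0 := by
  by_contra! h
  have := hco.map (evalRingHom z)
  simp only [coe_evalRingHom, h.1, h.2] at this
  exact not_isCoprime_zero_zero this

theorem Polynomial.ae_eval_ne_zero {R : Type*} [CommRing R] [IsDomain R] [MeasurableSpace R]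
    (μ : Measure R) [NullSingletonClass μ] {p : R[X]} (hp : p ≠ 0) : ∀ᵐ z ∂μ, p.eval z ≠ 0 :=
  ae_le_cofinite μ (finite_setOfPred_isRoot hp).eventually_cofinite_notMem

theorem Polynomial.nodup_roots_of_eval_derivative_ne_zero {R : Type*} [CommRing R] [IsDomain R]
    {p : R[X]} (h : ∀ z, p.IsRoot z → p.derivative.eval z ≠ 0) : p.roots.Nodup := by
  classical
  rcases eq_or_ne p 0 with rfl | hp
  · simp
  rw [Multiset.nodup_iff_count_le_one]
  intro z
  rw [count_roots]
  by_contra! hz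
  obtain ⟨hroot, hroot'⟩ := (one_lt_rootMultiplicity_iff_isRoot hp).1 hz
  exact h z hroot hroot'

theorem Wr_sub_C_mul (P Q : ℂ[X]) (w : ℂ) : Wr (P - C w * Q) Q = Wr P Q := by
  simp only [Wr, derivative_sub, derivative_mul, derivative_C, zero_mul, zero_add]
  ring

theorem natDegree_eq_zero_of_Wr_eq_zero {P Q : ℂ[X]} (hP : P ≠ 0) (hco : IsCoprime P Q)
    (h : Wr P Q = 0) : P.natDegree = 0 ∧ Q.natDegree = 0 := by
  have heq : derivative P * Q = P * derivative Q := sub_eq_zero.1 h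
  have hP' : derivative P = 0 :=
    eq_zero_of_dvd_of_degree_lt (hco.dvd_of_dvd_mul_right ⟨_, heq⟩) (degree_derivative_lt hP)
  have hQ' : derivative Q = 0 := by
    simpa [hP, hP'] using heq.symm
  exact ⟨derivative_eq_zero.1 hP', derivative_eq_zero.1 hQ'⟩

theorem eventually_coeff_sub_C_mul_ne_zero {P Q : ℂ[X]} (hP : P ≠ 0) (hQ : Q ≠ 0) :
    ∀ᶠ w in cofinite, (P - C w * Q).coeff (max P.natDegree Q.natDegree) ≠ 0 := by
  set d := max P.natDegree Q.natDegree
  have hlead : P.coeff d ≠ 0 ∨ Q.coeff d ≠ 0 := by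
    rcases max_choice P.natDegree Q.natDegree with h | h
    · exact .inl (by rw [show d = P.natDegree from h]; exact leadingCoeff_ne_zero.2 hP)
    · exact .inr (by rw [show d = Q.natDegree from h]; exact leadingCoeff_ne_zero.2 hQ)
  refine eventually_cofinite.2 ((finite_singleton (P.coeff d / Q.coeff d)).subset fun w hw => ?_)
  have hw : P.coeff d = w * Q.coeff d := by simpa [sub_eq_zero] using hw
  have hQd : Q.coeff d ≠ 0 := fun h0 => by simp [h0, hw] at hlead
  exact eq_div_of_mul_eq hQd hw.symm

theorem eventually_encard_fiber_eq_max_natDegree {P Q : ℂ[X]} (hP : P ≠ 0) (hQ : Q ≠ 0)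
    (hco : IsCoprime P Q) :
    ∀ᶠ w in cofinite, {z | (Q * Wr P Q).eval z ≠ 0 ∧ P.eval z / Q.eval z = w}.encard =
      max P.natDegree Q.natDegree := by
  rcases eq_or_ne (Wr P Q) 0 with hW | hW
  · obtain ⟨hP0, hQ0⟩ := natDegree_eq_zero_of_Wr_eq_zero hP hco hW
    exact .of_forall fun w => by simp [hW, hP0, hQ0]
  have hcrit := ((finite_setOfPred_isRoot hW).image fun z => P.eval z / Q.eval z)
    |>.eventually_cofinite_notMem
  filter_upwards [eventually_coeff_sub_C_mul_ne_zero hP hQ, hcrit] with w hcoeff hw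
  set R := P - C w * Q
  have hR0 : R ≠ 0 := fun h => hcoeff (by rw [h, coeff_zero])
  have hPz : ∀ z, R.IsRoot z ↔ P.eval z = w * Q.eval z := fun z => by
    simp [R, sub_eq_zero]
  have hQz : ∀ z, R.IsRoot z → Q.eval z ≠ 0 := fun z hz hQ0 => by
    have hP0 : P.eval z = 0 := by rw [(hPz z).1 hz, hQ0, mul_zero]
    simpa [hP0, hQ0] using eval_ne_zero_or_eval_ne_zero_of_isCoprime hco z
  have hWz : ∀ z, R.IsRoot z → (Wr P Q).eval z ≠ 0 := fun z hz hW0 =>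
    hw ⟨z, hW0, show P.eval z / Q.eval z = w by
      rw [(hPz z).1 hz, mul_div_cancel_right₀ _ (hQz z hz)]⟩
  have hR' : ∀ z, R.IsRoot z → R.derivative.eval z ≠ 0 := fun z hz hR'0 => by
    apply hWz z hz
    rw [← Wr_sub_C_mul P Q w, Wr, eval_sub, eval_mul, eval_mul, hR'0, hz.eq_zero]
    ring
  have hfiber : {z | (Q * Wr P Q).eval z ≠ 0 ∧ P.eval z / Q.eval z = w} =
      (R.roots.toFinset : Set ℂ) := by
    ext z
    simp only [mem_ofPred_eq, Finset.mem_coe, Multiset.mem_toFinset, mem_roots hR0, eval_mul]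
    refine ⟨fun ⟨hne, hfz⟩ => (hPz z).2 ?_, fun hz => ⟨mul_ne_zero (hQz z hz) (hWz z hz), ?_⟩⟩
    · exact (div_eq_iff (left_ne_zero_of_mul hne)).1 hfz
    · rw [(hPz z).1 hz, mul_div_cancel_right₀ _ (hQz z hz)]
  have hdeg : R.natDegree = max P.natDegree Q.natDegree :=
    le_antisymm ((natDegree_sub_le _ _).trans (max_le_max le_rfl (natDegree_C_mul_le _ _)))
      (le_natDegree_of_ne_zero hcoeff)
  rw [hfiber, encard_coe_eq_coe_finsetCard,
    Multiset.toFinset_card_of_nodup (nodup_roots_of_eval_derivative_ne_zero hR'),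
    IsAlgClosed.card_roots_eq_natDegree, hdeg]

theorem hasStrictDerivAt_eval_div_eval (P Q : ℂ[X]) {z : ℂ} (hz : Q.eval z ≠ 0) :
    HasStrictDerivAt (fun z => P.eval z / Q.eval z) ((Wr P Q).eval z / Q.eval z ^ 2) z := by
  simpa [Wr] using (P.hasStrictDerivAt z).fun_div (Q.hasStrictDerivAt z) hz

theorem sq_norm_eval_add_sq_norm_eval_pos {P Q : ℂ[X]} (hco : IsCoprime P Q) (z : ℂ) :
    0 < ‖P.eval z‖ ^ 2 + ‖Q.eval z‖ ^ 2 := by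
  rcases eval_ne_zero_or_eval_ne_zero_of_isCoprime hco z with h | h <;> positivity

theorem lintegral_sq_norm_Wr_div_eq_setLIntegral {P Q : ℂ[X]} (hQ : Q ≠ 0) :
    ∫⁻ z, ENNReal.ofReal (‖(Wr P Q).eval z‖ ^ 2 / (‖P.eval z‖ ^ 2 + ‖Q.eval z‖ ^ 2) ^ 2) =
      ∫⁻ z in {z | (Q * Wr P Q).eval z ≠ 0},
        ENNReal.ofReal (‖(Wr P Q).eval z‖ ^ 2 / (‖P.eval z‖ ^ 2 + ‖Q.eval z‖ ^ 2) ^ 2) := by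
  rw [← lintegral_indicator (isOpen_ne_fun (by fun_prop) continuous_const).measurableSet]
  refine lintegral_congr_ae ?_
  filter_upwards [ae_eval_ne_zero volume hQ] with z hQz
  by_cases hz : (Q * Wr P Q).eval z = 0
  · have hW : (Wr P Q).eval z = 0 := by simpa [hQz] using hz
    simp [hW]
  · rw [indicator_of_mem hz]

theorem lintegral_sq_norm_Wr_div_eq_pi_mul {P Q : ℂ[X]} (hP : P ≠ 0) (hQ : Q ≠ 0)
    (hco : IsCoprime P Q) :
    ∫⁻ z, ENNReal.ofReal (‖(Wr P Q).eval z‖ ^ 2 / (‖P.eval z‖ ^ 2 + ‖Q.eval z‖ ^ 2) ^ 2) =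
      ENNReal.ofReal (Real.pi * (max P.natDegree Q.natDegree : ℕ)) := by
  set f : ℂ → ℂ := fun z => P.eval z / Q.eval z
  set A := {z : ℂ | (Q * Wr P Q).eval z ≠ 0}
  have hA : MeasurableSet A := (isOpen_ne_fun (by fun_prop) continuous_const).measurableSet
  have hA' : ∀ z ∈ A, Q.eval z ≠ 0 ∧ (Wr P Q).eval z ≠ 0 := fun z hz => by
    simpa [A, not_or] using hz
  have hρ : Measurable fun w => ENNReal.ofReal (sphericalDensity w) :=
    continuous_sphericalDensity.measurable.ennreal_ofReal
  calc _ = ∫⁻ z in A, ENNReal.ofReal (Complex.normSq ((Wr P Q).eval z / Q.eval z ^ 2)) *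
          ENNReal.ofReal (sphericalDensity (f z)) := by
        refine (lintegral_sq_norm_Wr_div_eq_setLIntegral hQ).trans
          (setLIntegral_congr_fun hA fun z hz => ?_)
        rw [← ENNReal.ofReal_mul (Complex.normSq_nonneg _),
          normSq_div_sq_mul_sphericalDensity_div (hA' z hz).1]
    _ = ∫⁻ w, (A ∩ f ⁻¹' {w}).encard * ENNReal.ofReal (sphericalDensity w) :=
        Complex.lintegral_normSq_deriv_mul_eq_lintegral_encard_mul hA
          (fun z hz => hasStrictDerivAt_eval_div_eval P Q (hA' z hz).1)
          (fun z hz => div_ne_zero (hA' z hz).2 (pow_ne_zero 2 (hA' z hz).1)) hρ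
    _ = ∫⁻ w, (max P.natDegree Q.natDegree : ℕ) * ENNReal.ofReal (sphericalDensity w) := by
        refine lintegral_congr_ae (ae_le_cofinite volume ?_)
        filter_upwards [eventually_encard_fiber_eq_max_natDegree hP hQ hco] with w hw
        rw [show (A ∩ f ⁻¹' {w}).encard = max P.natDegree Q.natDegree from hw,
          ENat.toENNReal_coe]
    _ = _ := by
        rw [lintegral_const_mul _ hρ, lintegral_sphericalDensity, ← ENNReal.ofReal_natCast,
          ← ENNReal.ofReal_mul (by positivity), mul_comm]

/-- For nonzero coprime complex polynomials P, Q, the function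
z ↦ |W(P,Q)(z)|² / (|P(z)|² + |Q(z)|²)² is Lebesgue integrable on ℝ² ≅ ℂ with
integral π · max(deg P, deg Q). -/
theorem stmt1 (P Q : Polynomial ℂ) (hP : P ≠ 0) (hQ : Q ≠ 0) (hco : IsCoprime P Q) :
    Integrable (fun z : ℂ =>
      ‖(Wr P Q).eval z‖ ^ 2 /
        (‖P.eval z‖ ^ 2 + ‖Q.eval z‖ ^ 2) ^ 2) ∧
    ∫ z : ℂ, ‖(Wr P Q).eval z‖ ^ 2 /
        (‖P.eval z‖ ^ 2 + ‖Q.eval z‖ ^ 2) ^ 2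
      = Real.pi * (max P.natDegree Q.natDegree : ℝ) := by
  have hcont : Continuous fun z : ℂ =>
      ‖(Wr P Q).eval z‖ ^ 2 / (‖P.eval z‖ ^ 2 + ‖Q.eval z‖ ^ 2) ^ 2 :=
    (by fun_prop : Continuous fun z => ‖(Wr P Q).eval z‖ ^ 2).div (by fun_prop)
      fun z => (pow_pos (sq_norm_eval_add_sq_norm_eval_pos hco z) 2).ne'
  rw [← Nat.cast_max]
  exact integrable_and_integral_eq_of_lintegral_ofReal_eq hcont.aestronglyMeasurable
    (ae_of_all _ fun z => by positivity) (by positivity)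
    (lintegral_sq_norm_Wr_div_eq_pi_mul hP hQ hco)
end

section
/- Let P₁, Q₁, P₂, Q₂ ∈ ℂ[X] be polynomials. Then |P₁(z)|² + |Q₁(z)|² = |P₂(z)|² + |Q₂(z)|² for all z ∈ ℂ if and only if there exists a constant unitary matrix Λ ∈ U(2) (a 2×2 complex matrix with Λ*Λ = I) such that P₂ = Λ₁₁·P₁ + Λ₁₂·Q₁ and Q₂ = Λ₂₁·P₁ + Λ₂₂·Q₁. -/
/-!
Write `K(z, w) = ∑ᵢ Pᵢ(z) P̄ᵢ(w)`, where `P̄ᵢ` has the conjugated coefficients. The hypothesis says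
that `K₁ - K₂` vanishes at every `(z, z̄)`; a two-variable polynomial vanishing there is zero
(substitute `z = x + iy`, `w = x - iy` with `x, y` real). Hence `K₁(w, z̄) = K₂(w, z̄)`, i.e. the
families of vectors `(P₁(z), Q₁(z))` and `(P₂(z), Q₂(z))` in `ℂ²` have the same Gram matrix, so a
unitary map of `ℂ²` carries the first to the second; its matrix is `Λ`.
-/

open Polynomial Matrix ComplexConjugate
open scoped InnerProductSpace

namespace MvPolynomial

theorem eq_zero_of_eval_conj_eq_zero {p : MvPolynomial (Fin 2) ℂ}
    (h : ∀ z : ℂ, eval ![z, conj z] p = 0) : p = 0 := by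
  set q : MvPolynomial (Fin 2) ℂ :=
    bind₁ ![X 0 + C Complex.I * X 1, X 0 - C Complex.I * X 1] p
  have eval_q (x : Fin 2 → ℂ) :
      eval x q = eval ![x 0 + Complex.I * x 1, x 0 - Complex.I * x 1] p := by
    simp only [q, eval, eval₂Hom_bind₁]
    congr
    funext i; fin_cases i <;> simp
  have hq : q = 0 := by
    refine funext_set (fun _ ↦ Set.range ((↑) : ℝ → ℂ))
      (fun _ ↦ Set.infinite_range_of_injective Complex.ofReal_injective) fun x hx ↦ ?_
    obtain ⟨a, ha⟩ := hx 0 trivial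
    obtain ⟨b, hb⟩ := hx 1 trivial
    rw [eval_q, map_zero, ← ha, ← hb]
    convert h (a + Complex.I * b) using 3
    simp [Complex.conj_ofReal, sub_eq_add_neg]
  refine funext fun x ↦ ?_
  have := eval_q ![(x 0 + x 1) / 2, (x 0 - x 1) / (2 * Complex.I)]
  rw [hq, map_zero] at this
  rw [map_zero, this]
  congr
  ext i
  fin_cases i <;> simp only [Fin.zero_eta, Fin.mk_one, cons_val_zero, cons_val_one] <;>
    field_simp <;> ring

end MvPolynomial

theorem exists_linearIsometryEquiv_apply_eq_of_inner_eq {𝕜 E ι : Type*} [RCLike 𝕜]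
    [NormedAddCommGroup E] [InnerProductSpace 𝕜 E] [FiniteDimensional 𝕜 E] {s t : ι → E}
    (h : ∀ i j, ⟪s i, s j⟫_𝕜 = ⟪t i, t j⟫_𝕜) : ∃ U : E ≃ₗᵢ[𝕜] E, ∀ i, U (s i) = t i := by
  set f := Finsupp.linearCombination 𝕜 s
  set g := Finsupp.linearCombination 𝕜 t
  have inner_eq (u v : ι →₀ 𝕜) : ⟪f u, f v⟫_𝕜 = ⟪g u, g v⟫_𝕜 := by
    simp [f, g, Finsupp.linearCombination_apply, Finsupp.sum_inner, Finsupp.inner_sum,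
      inner_smul_left, inner_smul_right, h]
  have norm_eq (u : ι →₀ 𝕜) : ‖f u‖ = ‖g u‖ := by
    rw [norm_eq_sqrt_re_inner (𝕜 := 𝕜), norm_eq_sqrt_re_inner (𝕜 := 𝕜), inner_eq]
  have ker_le : LinearMap.ker f ≤ LinearMap.ker g := fun u hu ↦ by
    rw [LinearMap.mem_ker, ← norm_eq_zero, ← norm_eq, norm_eq_zero]
    exact hu
  let L : LinearMap.range f →ₗ[𝕜] E :=
    (LinearMap.ker f).liftQ g ker_le ∘ₗ f.quotKerEquivRange.symm
  have L_apply (u : ι →₀ 𝕜) : L ⟨f u, LinearMap.mem_range_self f u⟩ = g u := by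
    simp [L, LinearMap.quotKerEquivRange_symm_apply_image]
  let L' : LinearMap.range f →ₗᵢ[𝕜] E :=
    { L with
      norm_map' := by
        rintro ⟨_, u, rfl⟩
        exact (congrArg norm (L_apply u)).trans (norm_eq u).symm }
  refine ⟨L'.extend.toLinearIsometryEquiv rfl, fun i ↦ ?_⟩
  have := L'.extend_apply ⟨f (Finsupp.single i 1), LinearMap.mem_range_self f _⟩
  simpa [f, g, L'] using this.trans (L_apply _)

namespace Matrix

variable {𝕜 ι : Type*} [RCLike 𝕜] [Fintype ι] [DecidableEq ι]

theorem exists_mem_unitaryGroup_mulVec_eq (U : EuclideanSpace 𝕜 ι ≃ₗᵢ[𝕜] EuclideanSpace 𝕜 ι) :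
    ∃ Λ ∈ unitaryGroup ι 𝕜, ∀ x, Λ *ᵥ x.ofLp = (U x).ofLp :=
  ⟨(toEuclideanCLM (n := ι) (𝕜 := 𝕜)).symm (Unitary.linearIsometryEquiv.symm U),
    Unitary.map_mem _ (Unitary.linearIsometryEquiv.symm U).2, fun x ↦ by
      rw [← ofLp_toEuclideanCLM]; simp⟩

theorem norm_toLp_mulVec_of_mem_unitaryGroup {Λ : Matrix ι ι 𝕜} (hΛ : Λ ∈ unitaryGroup ι 𝕜)
    (v : ι → 𝕜) : ‖WithLp.toLp 2 (Λ *ᵥ v)‖ = ‖WithLp.toLp 2 v‖ := by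
  rw [← toEuclideanCLM_toLp]
  exact ContinuousLinearMap.norm_map_of_mem_unitary (Unitary.map_mem toEuclideanCLM hΛ) _

end Matrix

namespace Polynomial

variable {ι : Type*} [Fintype ι]

noncomputable def evalEuclidean (P : ι → ℂ[X]) (z : ℂ) : EuclideanSpace ℂ ι :=
  WithLp.toLp 2 fun i ↦ (P i).eval z

noncomputable def kernelPoly (P : ι → ℂ[X]) : MvPolynomial (Fin 2) ℂ :=
  ∑ i, (P i).toMvPolynomial 0 * ((P i).map (starRingEnd ℂ)).toMvPolynomial 1

theorem eval_kernelPoly (P : ι → ℂ[X]) (z w : ℂ) :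
    MvPolynomial.eval ![w, conj z] (kernelPoly P) = ⟪evalEuclidean P z, evalEuclidean P w⟫_ℂ := by
  simp [kernelPoly, evalEuclidean, PiLp.inner_apply, eval_map_apply]

theorem inner_evalEuclidean_eq_of_norm_eq {P Q : ι → ℂ[X]}
    (h : ∀ z, ‖evalEuclidean P z‖ = ‖evalEuclidean Q z‖) (z w : ℂ) :
    ⟪evalEuclidean P z, evalEuclidean P w⟫_ℂ = ⟪evalEuclidean Q z, evalEuclidean Q w⟫_ℂ := by
  have : kernelPoly P - kernelPoly Q = 0 := MvPolynomial.eq_zero_of_eval_conj_eq_zero fun z ↦ by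
    rw [map_sub, eval_kernelPoly, eval_kernelPoly, inner_self_eq_norm_sq_to_K,
      inner_self_eq_norm_sq_to_K, h, sub_self]
  rw [← eval_kernelPoly, ← eval_kernelPoly, sub_eq_zero.mp this]

theorem eq_sum_C_mul_iff_mulVec_evalEuclidean (P Q : ι → ℂ[X]) (Λ : Matrix ι ι ℂ) :
    (∀ i, Q i = ∑ j, C (Λ i j) * P j) ↔
      ∀ z, Λ *ᵥ (evalEuclidean P z).ofLp = (evalEuclidean Q z).ofLp := by
  simp only [evalEuclidean, funext_iff, Matrix.mulVec, dotProduct]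
  constructor
  · rintro hQ z i
    simp [hQ i, eval_finsetSum]
  · refine fun hQ i ↦ Polynomial.funext fun z ↦ ?_
    simp [← hQ z i, eval_finsetSum]

theorem sum_sq_norm_eval_eq_iff_exists_unitary [DecidableEq ι] (P Q : ι → ℂ[X]) :
    (∀ z : ℂ, ∑ i, ‖(P i).eval z‖ ^ 2 = ∑ i, ‖(Q i).eval z‖ ^ 2) ↔
      ∃ Λ ∈ Matrix.unitaryGroup ι ℂ, ∀ i, Q i = ∑ j, C (Λ i j) * P j := by
  have norm_eq_iff (z : ℂ) : ∑ i, ‖(P i).eval z‖ ^ 2 = ∑ i, ‖(Q i).eval z‖ ^ 2 ↔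
      ‖evalEuclidean P z‖ = ‖evalEuclidean Q z‖ := by
    rw [← sq_eq_sq₀ (norm_nonneg _) (norm_nonneg _), EuclideanSpace.norm_sq_eq,
      EuclideanSpace.norm_sq_eq]
    rfl
  simp_rw [norm_eq_iff, eq_sum_C_mul_iff_mulVec_evalEuclidean]
  constructor
  · intro h
    obtain ⟨U, hU⟩ := exists_linearIsometryEquiv_apply_eq_of_inner_eq
      (inner_evalEuclidean_eq_of_norm_eq h)
    obtain ⟨Λ, hΛ, hΛU⟩ := Matrix.exists_mem_unitaryGroup_mulVec_eq U
    exact ⟨Λ, hΛ, fun z ↦ by rw [hΛU, hU]⟩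
  · rintro ⟨Λ, hΛ, hQ⟩ z
    rw [← WithLp.toLp_ofLp 2 (evalEuclidean Q z), ← hQ,
      Matrix.norm_toLp_mulVec_of_mem_unitaryGroup hΛ, WithLp.toLp_ofLp]

end Polynomial

/-- |P₁|² + |Q₁|² = |P₂|² + |Q₂|² pointwise on ℂ iff
(P₂,Q₂) = Λ(P₁,Q₁) for some constant unitary matrix Λ ∈ U(2). -/
theorem stmt3 (P₁ Q₁ P₂ Q₂ : Polynomial ℂ) :
    (∀ z : ℂ, ‖P₁.eval z‖ ^ 2 + ‖Q₁.eval z‖ ^ 2 =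
      ‖P₂.eval z‖ ^ 2 + ‖Q₂.eval z‖ ^ 2) ↔
    ∃ Λ : Matrix (Fin 2) (Fin 2) ℂ, Λ ∈ Matrix.unitaryGroup (Fin 2) ℂ ∧
      P₂ = Polynomial.C (Λ 0 0) * P₁ + Polynomial.C (Λ 0 1) * Q₁ ∧
      Q₂ = Polynomial.C (Λ 1 0) * P₁ + Polynomial.C (Λ 1 1) * Q₁ := by
  simpa [Fin.sum_univ_two, Fin.forall_fin_two] using
    sum_sq_norm_eval_eq_iff_exists_unitary ![P₁, Q₁] ![P₂, Q₂]
end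

section
/- Let P, Q ∈ ℂ[X] and let z ∈ ℂ be a point where |P(z)|² + |Q(z)|² > 0. Then, on the open set where |P|² + |Q|² > 0 (so that log(|P|² + |Q|²) is smooth there), one has the pointwise identity (1/4)·Δ log(|P|² + |Q|²)(z) = |P'(z)·Q(z) − P(z)·Q'(z)|² / (|P(z)|² + |Q(z)|²)². -/
/-!
Write `u = ‖P‖² + ‖Q‖²`. Where `u > 0`, `Δ log u = Δu / u - |∇u|² / u²`. For a holomorphic `f`,
the derivative of `‖f‖²` in the direction `e` is `2⟪f, e f'⟫`, and `Δ‖f‖² = 4‖f'‖²` because the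
`f''` terms of the two directions `1` and `i` cancel. Hence `Δu = 4(‖P'‖² + ‖Q'‖²)` and
`|∇u|² = 4 |P̄P' + Q̄Q'|²`, and Lagrange's identity
`(‖P‖² + ‖Q‖²)(‖P'‖² + ‖Q'‖²) - |P̄P' + Q̄Q'|² = ‖P'Q - PQ'‖²` gives the result.
-/

open Polynomial

open Complex Topology
open scoped InnerProductSpace

section RealLaplacian

variable {u v : ℂ → ℝ}

lemma ContDiff.differentiable_fderiv_apply (hu : ContDiff ℝ 2 u) (e : ℂ) :
    Differentiable ℝ (fun w => fderiv ℝ u w e) :=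
  ((hu.fderiv_right (m := 1) (by norm_num)).differentiable one_ne_zero).clm_apply
    (differentiable_const e)

lemma lap_add (hu : ContDiff ℝ 2 u) (hv : ContDiff ℝ 2 v) (z : ℂ) :
    lap (fun w => u w + v w) z = lap u z + lap v z := by
  have hfd : ∀ e, (fun w => fderiv ℝ (fun x => u x + v x) w e)
      = fun w => fderiv ℝ u w e + fderiv ℝ v w e := fun e => funext fun w => by
    rw [fderiv_fun_add (hu.differentiable two_ne_zero w) (hv.differentiable two_ne_zero w)]
    rfl
  simp only [lap, hfd]
  rw [fderiv_fun_add (hu.differentiable_fderiv_apply 1 z) (hv.differentiable_fderiv_apply 1 z),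
    fderiv_fun_add (hu.differentiable_fderiv_apply I z) (hv.differentiable_fderiv_apply I z)]
  simp only [add_apply]
  ring

lemma fderiv_fderiv_log_apply (hu : ContDiff ℝ 2 u) {z : ℂ} (hz : 0 < u z) (e : ℂ) :
    fderiv ℝ (fun w => fderiv ℝ (fun x => Real.log (u x)) w e) z e
      = fderiv ℝ (fun w => fderiv ℝ u w e) z e / u z - (fderiv ℝ u z e) ^ 2 / u z ^ 2 := by
  have hpos : ∀ᶠ w in 𝓝 z, 0 < u w :=
    continuousAt_const.eventually_lt hu.continuous.continuousAt hz
  have hlog : (fun w => fderiv ℝ (fun x => Real.log (u x)) w e)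
      =ᶠ[𝓝 z] fun w => (u w)⁻¹ * fderiv ℝ u w e := by
    filter_upwards [hpos] with w hw
    rw [((hu.differentiable two_ne_zero w).hasFDerivAt.log hw.ne').fderiv]
    rfl
  have hinv : HasFDerivAt (fun w => (u w)⁻¹) (-(u z ^ 2)⁻¹ • fderiv ℝ u z) z :=
    (hasDerivAt_inv hz.ne').comp_hasFDerivAt z (hu.differentiable two_ne_zero z).hasFDerivAt
  rw [hlog.fderiv_eq,
    (hinv.fun_mul (hu.differentiable_fderiv_apply e z).hasFDerivAt).fderiv]
  simp only [add_apply, smul_apply, smul_eq_mul]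
  field_simp
  ring

lemma lap_log (hu : ContDiff ℝ 2 u) {z : ℂ} (hz : 0 < u z) :
    lap (fun w => Real.log (u w)) z
      = lap u z / u z - ((fderiv ℝ u z 1) ^ 2 + (fderiv ℝ u z I) ^ 2) / u z ^ 2 := by
  rw [lap, lap, fderiv_fderiv_log_apply hu hz, fderiv_fderiv_log_apply hu hz]
  ring

end RealLaplacian

section Holomorphic

variable {f : ℂ → ℂ}

lemma fderiv_norm_sq_apply_of_differentiableAt {w : ℂ} (hf : DifferentiableAt ℂ f w) (e : ℂ) :
    fderiv ℝ (fun x => ‖f x‖ ^ 2) w e = 2 * ⟪f w, e * deriv f w⟫_ℝ := by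
  rw [(hf.hasDerivAt.hasFDerivAt.restrictScalars ℝ).norm_sq.fderiv]
  simp [-Complex.inner]

lemma contDiff_norm_sq_of_differentiable (hf : Differentiable ℂ f) {n : WithTop ℕ∞} :
    ContDiff ℝ n (fun w => ‖f w‖ ^ 2) :=
  (contDiff_norm_sq ℝ).comp (hf.contDiff.restrict_scalars ℝ)

lemma lap_norm_sq_of_differentiable (hf : Differentiable ℂ f) (z : ℂ) :
    lap (fun w => ‖f w‖ ^ 2) z = 4 * ‖deriv f z‖ ^ 2 := by
  have hfd : ∀ e, (fun w => fderiv ℝ (fun x => ‖f x‖ ^ 2) w e)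
      = fun w => 2 * ⟪f w, e * deriv f w⟫_ℝ := fun e => funext fun w =>
    fderiv_norm_sq_apply_of_differentiableAt (hf w) e
  have hsecond : ∀ e, fderiv ℝ (fun w => 2 * ⟪f w, e * deriv f w⟫_ℝ) z e
      = 2 * (‖e * deriv f z‖ ^ 2 + ⟪f z, e * (e * deriv (deriv f) z)⟫_ℝ) := by
    intro e
    have hf' := (hf z).hasDerivAt.hasFDerivAt.restrictScalars ℝ
    have hf'' := ((hf.deriv z).hasDerivAt.hasFDerivAt.restrictScalars ℝ).const_mul e
    rw [((hf'.inner ℝ hf'').const_mul 2).fderiv]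
    simp only [smul_apply, ContinuousLinearMap.comp_apply, ContinuousLinearMap.prod_apply,
      ContinuousLinearMap.coe_restrictScalars', ContinuousLinearMap.toSpanSingleton_apply,
      smul_eq_mul, fderivInnerCLM_apply]
    rw [real_inner_self_eq_norm_sq]
    ring
  have hI : ∀ x : ℂ, I * (I * x) = -x := fun x => by rw [← mul_assoc, I_mul_I, neg_one_mul]
  rw [lap, hfd, hfd, hsecond, hsecond]
  simp only [one_mul, hI, inner_neg_right, norm_mul, norm_I]
  ring

end Holomorphic

lemma sq_norm_mul_sub_mul (a b c d : ℂ) :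
    ‖c * b - a * d‖ ^ 2 = (‖a‖ ^ 2 + ‖b‖ ^ 2) * (‖c‖ ^ 2 + ‖d‖ ^ 2)
      - (⟪a, c⟫_ℝ + ⟪b, d⟫_ℝ) ^ 2 - (⟪a, I * c⟫_ℝ + ⟪b, I * d⟫_ℝ) ^ 2 := by
  simp only [Complex.inner, Complex.sq_norm, normSq_apply, mul_re, mul_im, conj_re, conj_im,
    sub_re, sub_im, I_re, I_im]
  ring

/-- at every point z with |P(z)|² + |Q(z)|² > 0,
(1/4)·Δ log(|P|² + |Q|²)(z) = |P'(z)Q(z) − P(z)Q'(z)|² / (|P(z)|² + |Q(z)|²)². -/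
theorem stmt6 (P Q : Polynomial ℂ) (z : ℂ)
    (h : 0 < ‖P.eval z‖ ^ 2 + ‖Q.eval z‖ ^ 2) :
    (1 / 4) * lap (fun w =>
        Real.log (‖P.eval w‖ ^ 2 + ‖Q.eval w‖ ^ 2)) z
      = ‖P.derivative.eval z * Q.eval z - P.eval z * Q.derivative.eval z‖ ^ 2 /
        (‖P.eval z‖ ^ 2 + ‖Q.eval z‖ ^ 2) ^ 2 := by
  have hP : Differentiable ℂ (fun w => P.eval w) := P.differentiable
  have hQ : Differentiable ℂ (fun w => Q.eval w) := Q.differentiable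
  have hP2 : ContDiff ℝ 2 (fun w => ‖P.eval w‖ ^ 2) := contDiff_norm_sq_of_differentiable hP
  have hQ2 : ContDiff ℝ 2 (fun w => ‖Q.eval w‖ ^ 2) := contDiff_norm_sq_of_differentiable hQ
  have hgrad : ∀ e, fderiv ℝ (fun w => ‖P.eval w‖ ^ 2 + ‖Q.eval w‖ ^ 2) z e
      = 2 * ⟪P.eval z, e * P.derivative.eval z⟫_ℝ
        + 2 * ⟪Q.eval z, e * Q.derivative.eval z⟫_ℝ := by
    intro e
    rw [fderiv_fun_add (hP2.differentiable two_ne_zero z) (hQ2.differentiable two_ne_zero z),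
      add_apply, fderiv_norm_sq_apply_of_differentiableAt (hP z),
      fderiv_norm_sq_apply_of_differentiableAt (hQ z), Polynomial.deriv, Polynomial.deriv]
  rw [lap_log (hP2.add hQ2) h, lap_add hP2 hQ2, lap_norm_sq_of_differentiable hP,
    lap_norm_sq_of_differentiable hQ, hgrad, hgrad, Polynomial.deriv, Polynomial.deriv,
    sq_norm_mul_sub_mul]
  field_simp
  ring
end

section
/- Let f, R ∈ ℂ[X] with R ≠ 0, and suppose the equation f·y'' − f'·y' + R·y = 0 admits two linearly independent polynomial solutions y ∈ ℂ[X]. Then there exist linearly independent polynomial solutions P, Q of this equation with deg P > deg Q and deg P + deg Q = deg f + 1 such that every polynomial solution y of the equation is of the form y = λ·P + μ·Q for some λ, μ ∈ ℂ. -/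
/-!
The Wronskian `W(y, z) = y z' - y' z` of two solutions satisfies `f W' = f' W`, and over a field
of characteristic zero this forces `W` to be a constant multiple of `f`. If `deg Q < deg P`, the
coefficient of `W(Q, P)` in degree `deg P + deg Q - 1` is `lc P * lc Q * (deg P - deg Q) ≠ 0`;
hence `W(Q, P)` is a nonzero multiple of `f` of that degree, and `W(Q, y) = 0` only for multiples
`y` of `Q`. The first gives `deg P + deg Q = deg f + 1`; the second, applied to
`y - (W(Q, y) / W(Q, P)) P`, shows that `P` and `Q` span the solutions. Solutions of distinct
degrees are obtained from any independent pair by cancelling leading coefficients.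
-/

open Polynomial

namespace Polynomial

section CommRing

variable {R : Type*} [CommRing R]

theorem coeff_mul_derivative_of_natDegree_eq_succ (a b : R[X]) {n : ℕ}
    (hb : b.natDegree = n + 1) :
    (a * derivative b).coeff (a.natDegree + n) = a.leadingCoeff * b.leadingCoeff * (n + 1) := by
  rw [coeff_mul_add_eq_of_natDegree_le le_rfl (by have := natDegree_derivative_le b; omega),
    coeff_derivative, ← hb, mul_assoc]
  rfl

theorem coeff_wronskian_of_natDegree_eq_succ (a b : R[X]) {n : ℕ} (hb : b.natDegree = n + 1) :
    (wronskian a b).coeff (a.natDegree + n) =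
      a.leadingCoeff * b.leadingCoeff * ((n + 1 : R) - a.natDegree) := by
  rw [wronskian, coeff_sub, coeff_mul_derivative_of_natDegree_eq_succ a b hb]
  rcases ha : a.natDegree with _ | m
  · simp [derivative_of_natDegree_zero ha]
  · rw [mul_comm (derivative a), show m + 1 + n = b.natDegree + m by omega,
      coeff_mul_derivative_of_natDegree_eq_succ b a ha]
    push_cast
    ring

variable [IsDomain R] [CharZero R]

theorem coeff_wronskian_ne_zero_of_natDegree_lt {a b : R[X]} (ha : a ≠ 0)
    (h : a.natDegree < b.natDegree) :
    (wronskian a b).coeff (a.natDegree + b.natDegree - 1) ≠ 0 := by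
  obtain ⟨n, hn⟩ : ∃ n, b.natDegree = n + 1 := ⟨b.natDegree - 1, by omega⟩
  have hb : b ≠ 0 := ne_zero_of_natDegree_gt h
  rw [show a.natDegree + b.natDegree - 1 = a.natDegree + n by omega,
    coeff_wronskian_of_natDegree_eq_succ a b hn]
  refine mul_ne_zero (mul_ne_zero (leadingCoeff_ne_zero.2 ha) (leadingCoeff_ne_zero.2 hb)) ?_
  rw [sub_ne_zero]
  exact_mod_cast (show n + 1 ≠ a.natDegree by omega)

theorem wronskian_ne_zero_of_natDegree_lt {a b : R[X]} (ha : a ≠ 0)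
    (h : a.natDegree < b.natDegree) : wronskian a b ≠ 0 := fun hw =>
  coeff_wronskian_ne_zero_of_natDegree_lt ha h (by rw [hw, coeff_zero])

theorem natDegree_wronskian_of_natDegree_lt {a b : R[X]} (ha : a ≠ 0)
    (h : a.natDegree < b.natDegree) :
    (wronskian a b).natDegree = a.natDegree + b.natDegree - 1 := by
  have := natDegree_wronskian_lt_add (wronskian_ne_zero_of_natDegree_lt ha h)
  have := le_natDegree_of_ne_zero (coeff_wronskian_ne_zero_of_natDegree_lt ha h)
  omega

end CommRing

section Field

variable {K : Type*} [Field K]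

theorem linearIndependent_pair_iff_C_mul {p q : K[X]} :
    LinearIndependent K ![p, q] ↔ ∀ a b : K, C a * p + C b * q = 0 → a = 0 ∧ b = 0 := by
  simp only [LinearIndependent.pair_iff, smul_eq_C_mul]

theorem linearIndependent_pair_of_natDegree_lt {p q : K[X]} (hq : q ≠ 0)
    (h : q.natDegree < p.natDegree) : LinearIndependent K ![p, q] := by
  rw [LinearIndependent.pair_iff' (ne_zero_of_natDegree_gt h)]
  intro a hpq
  rcases eq_or_ne a 0 with rfl | ha
  · exact hq (by rw [← hpq, zero_smul])
  · rw [← hpq, natDegree_smul _ ha] at h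
    exact h.false

theorem natDegree_sub_C_mul_lt {p q : K[X]} (hp : p ≠ 0) (h : q.natDegree = p.natDegree)
    (hne : q - C (q.leadingCoeff / p.leadingCoeff) * p ≠ 0) :
    (q - C (q.leadingCoeff / p.leadingCoeff) * p).natDegree < p.natDegree := by
  have hq : q ≠ 0 := by rintro rfl; simp at hne
  have hc : q.leadingCoeff / p.leadingCoeff ≠ 0 := by simp [hp, hq]
  rw [← h]
  refine natDegree_lt_natDegree hne (degree_sub_lt_left ?_ hq ?_)
  · rw [degree_C_mul hc, degree_eq_natDegree hp, degree_eq_natDegree hq, h]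
  · rw [leadingCoeff_mul, leadingCoeff_C, div_mul_cancel₀ _ (leadingCoeff_ne_zero.2 hp)]

theorem exists_natDegree_lt_of_linearIndependent (S : Submodule K K[X]) {y₁ y₂ : K[X]}
    (h₁ : y₁ ∈ S) (h₂ : y₂ ∈ S) (hind : LinearIndependent K ![y₁, y₂]) :
    ∃ P ∈ S, ∃ Q ∈ S, Q ≠ 0 ∧ Q.natDegree < P.natDegree := by
  rcases lt_trichotomy y₁.natDegree y₂.natDegree with hlt | heq | hgt
  · exact ⟨y₂, h₂, y₁, h₁, hind.ne_zero 0, hlt⟩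
  · have hne : y₂ - C (y₂.leadingCoeff / y₁.leadingCoeff) * y₁ ≠ 0 := by
      rw [sub_ne_zero, ← smul_eq_C_mul]
      exact ((LinearIndependent.pair_iff' (hind.ne_zero 0)).1 hind _).symm
    refine ⟨y₁, h₁, _, S.sub_mem h₂ ?_, hne, natDegree_sub_C_mul_lt (hind.ne_zero 0) heq.symm hne⟩
    rw [← smul_eq_C_mul]
    exact S.smul_mem _ h₁
  · exact ⟨y₁, h₁, y₂, h₂, hind.ne_zero 1, hgt⟩

variable [CharZero K]

theorem eq_C_mul_of_wronskian_eq_zero {u v : K[X]} (hu : u ≠ 0) (h : wronskian u v = 0) :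
    ∃ c : K, v = C c * u := by
  by_contra! hne
  have hv : v ≠ 0 := by simpa using hne 0
  have hdeg : v.natDegree = u.natDegree := by
    rcases lt_trichotomy u.natDegree v.natDegree with hlt | heq | hgt
    · exact absurd h (wronskian_ne_zero_of_natDegree_lt hu hlt)
    · exact heq.symm
    · exact absurd (by rw [← wronskian_neg_eq, h, neg_zero])
        (wronskian_ne_zero_of_natDegree_lt hv hgt)
  have hw := sub_ne_zero.2 (hne (v.leadingCoeff / u.leadingCoeff))
  refine wronskian_ne_zero_of_natDegree_lt hw (natDegree_sub_C_mul_lt hu hdeg hw) ?_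
  simp only [wronskian, derivative_sub, derivative_C_mul] at h ⊢
  linear_combination -h

theorem eq_C_mul_add_C_mul_of_wronskian_eq {P Q y : K[X]} {a : K} (hQ : Q ≠ 0)
    (h : wronskian Q y = C a * wronskian Q P) : ∃ c : K, y = C a * P + C c * Q := by
  obtain ⟨c, hc⟩ : ∃ c : K, y - C a * P = C c * Q := by
    refine eq_C_mul_of_wronskian_eq_zero hQ ?_
    simp only [wronskian, derivative_sub, derivative_C_mul] at h ⊢
    linear_combination h
  exact ⟨c, by linear_combination hc⟩

end Field

section OrdinaryDifferentialEquation

variable {A : Type*} [CommRing A]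

noncomputable def odeSolutions (f R : A[X]) : Submodule A A[X] :=
  LinearMap.ker (LinearMap.mulLeft A f ∘ₗ derivative ∘ₗ derivative
    - LinearMap.mulLeft A (derivative f) ∘ₗ derivative + LinearMap.mulLeft A R)

theorem mem_odeSolutions {f R y : A[X]} :
    y ∈ odeSolutions f R ↔
      f * derivative (derivative y) - derivative f * derivative y + R * y = 0 :=
  Iff.rfl

theorem wronskian_wronskian_eq_zero_of_mem_odeSolutions {f R y z : A[X]}
    (hy : y ∈ odeSolutions f R) (hz : z ∈ odeSolutions f R) :
    wronskian f (wronskian y z) = 0 := by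
  rw [mem_odeSolutions] at hy hz
  simp only [wronskian, derivative_sub, derivative_mul]
  linear_combination y * hz - z * hy

theorem exists_wronskian_eq_C_mul_of_mem_odeSolutions {K : Type*} [Field K] [CharZero K]
    {f R y z : K[X]} (hf : f ≠ 0) (hy : y ∈ odeSolutions f R) (hz : z ∈ odeSolutions f R) :
    ∃ c : K, wronskian y z = C c * f :=
  eq_C_mul_of_wronskian_eq_zero hf (wronskian_wronskian_eq_zero_of_mem_odeSolutions hy hz)

end OrdinaryDifferentialEquation

end Polynomial

/-- if R ≠ 0 and the ODE f·y'' − f'·y' + R·y = 0 admits two linearly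
independent polynomial solutions, then there are linearly independent polynomial
solutions P, Q with deg P > deg Q and deg P + deg Q = deg f + 1 such that every
polynomial solution is λ·P + μ·Q. -/
theorem stmt9 (f R : Polynomial ℂ) (hR : R ≠ 0)
    (hsol : ∃ y₁ y₂ : Polynomial ℂ,
      (f * y₁.derivative.derivative - f.derivative * y₁.derivative + R * y₁ = 0) ∧
      (f * y₂.derivative.derivative - f.derivative * y₂.derivative + R * y₂ = 0) ∧
      (∀ a b : ℂ, Polynomial.C a * y₁ + Polynomial.C b * y₂ = 0 → a = 0 ∧ b = 0)) :
    ∃ P Q : Polynomial ℂ,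
      (f * P.derivative.derivative - f.derivative * P.derivative + R * P = 0) ∧
      (f * Q.derivative.derivative - f.derivative * Q.derivative + R * Q = 0) ∧
      (∀ a b : ℂ, Polynomial.C a * P + Polynomial.C b * Q = 0 → a = 0 ∧ b = 0) ∧
      Q.natDegree < P.natDegree ∧
      P.natDegree + Q.natDegree = f.natDegree + 1 ∧
      ∀ y : Polynomial ℂ,
        f * y.derivative.derivative - f.derivative * y.derivative + R * y = 0 →
        ∃ lam mu : ℂ, y = Polynomial.C lam * P + Polynomial.C mu * Q := by
  obtain ⟨y₁, y₂, h₁, h₂, hind⟩ := hsol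
  rw [← linearIndependent_pair_iff_C_mul] at hind
  have hf : f ≠ 0 := by
    rintro rfl
    apply hind.ne_zero 0
    simpa [hR] using h₁
  obtain ⟨P, hP, Q, hQ, hQ0, hlt⟩ := exists_natDegree_lt_of_linearIndependent
    (odeSolutions f R) (mem_odeSolutions.2 h₁) (mem_odeSolutions.2 h₂) hind
  obtain ⟨γ, hγ⟩ := exists_wronskian_eq_C_mul_of_mem_odeSolutions hf hQ hP
  have hγ0 : γ ≠ 0 := by
    rintro rfl
    exact wronskian_ne_zero_of_natDegree_lt hQ0 hlt (by rw [hγ, C_0, zero_mul])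
  refine ⟨P, Q, mem_odeSolutions.1 hP, mem_odeSolutions.1 hQ,
    linearIndependent_pair_iff_C_mul.1 (linearIndependent_pair_of_natDegree_lt hQ0 hlt), hlt,
    ?_, fun y hy => ?_⟩
  · have hdeg := natDegree_wronskian_of_natDegree_lt hQ0 hlt
    rw [hγ, natDegree_C_mul hγ0] at hdeg
    omega
  · obtain ⟨α, hα⟩ := exists_wronskian_eq_C_mul_of_mem_odeSolutions hf hQ (mem_odeSolutions.2 hy)
    obtain ⟨μ, hμ⟩ := eq_C_mul_add_C_mul_of_wronskian_eq (P := P) (a := α / γ) hQ0 (by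
      rw [hα, hγ, ← mul_assoc, ← C_mul, div_mul_cancel₀ _ hγ0])
    exact ⟨α / γ, μ, hμ⟩
end

section
/- Let n ≥ 0 be an integer, a ∈ ℂ \ {0}, z₀ ∈ ℂ, and f := a·(X − z₀)^n ∈ ℂ[X]. A pair (P,Q) of nonzero polynomials is a coprime Wronskian pair for f if and only if P = α₁·(X − z₀)^{n+1} + β₁ and Q = α₂·(X − z₀)^{n+1} + β₂ for constants α₁, α₂, β₁, β₂ ∈ ℂ satisfying α₁·β₂ − α₂·β₁ = a/(n+1). -/
open Polynomial

lemma ode0 {n : ℕ} {g : ℂ[X]} (h : X * derivative g = C (n:ℂ) * g) :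
    g = C (g.coeff n) * X ^ n := by
  ext k
  rcases eq_or_ne k n with rfl | hk
  · simp
  · have key : (k : ℂ) * g.coeff k = (n : ℂ) * g.coeff k := by
      cases k with
      | zero =>
        have h0 := congrArg (fun p => p.coeff 0) h
        simp only [coeff_X_mul_zero, coeff_C_mul] at h0
        simpa using h0.symm
      | succ m =>
        have := congrArg (fun p => p.coeff (m+1)) h
        simp only [coeff_X_mul, coeff_C_mul, coeff_derivative] at this
        push_cast
        linear_combination this
    have hz : ((k : ℂ) - n) * g.coeff k = 0 := by linear_combination key
    rcases mul_eq_zero.mp hz with h0 | h0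
    · exact absurd (by exact_mod_cast sub_eq_zero.mp h0) hk
    · simp [h0, coeff_C_mul, coeff_X_pow, hk]

lemma ode {z₀ : ℂ} {n : ℕ} {g : ℂ[X]} (h : (X - C z₀) * derivative g = C (n:ℂ) * g) :
    ∃ c : ℂ, g = C c * (X - C z₀) ^ n := by
  set h₁ := g.comp (X + C z₀) with hh₁
  have hd : derivative h₁ = (derivative g).comp (X + C z₀) := by
    rw [hh₁, derivative_comp]; simp
  have hcomp : X * derivative h₁ = C (n:ℂ) * h₁ := by
    have := congrArg (fun p => p.comp (X + C z₀)) h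
    simp only [mul_comp, sub_comp, X_comp, C_comp] at this
    rw [hd, hh₁]
    convert this using 2
    ring
  obtain ⟨c, hode⟩ : ∃ c, h₁ = C c * X ^ n := ⟨_, ode0 hcomp⟩
  have hXX : (X + C z₀).comp (X - C z₀) = (X : ℂ[X]) := by
    simp [add_comp, sub_add_cancel]
  have hg : g = h₁.comp (X - C z₀) := by
    rw [hh₁, comp_assoc, hXX, comp_X]
  exact ⟨c, by rw [hg, hode, mul_comp, C_comp, pow_comp, X_comp]⟩

lemma integ {z₀ c : ℂ} {n : ℕ} {P : ℂ[X]} (h : derivative P = C c * (X - C z₀) ^ n) :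
    ∃ α β : ℂ, P = C α * (X - C z₀) ^ (n+1) + C β ∧ ((n:ℂ)+1) * α = c := by
  have hn1 : ((n:ℂ)+1) ≠ 0 := Nat.cast_add_one_ne_zero n
  set D := P - C (c / ((n:ℂ)+1)) * (X - C z₀) ^ (n+1) with hD
  have hc : C (c / ((n:ℂ)+1)) * C ((n:ℂ)+1) = C c := by
    rw [← C_mul, div_mul_cancel₀ _ hn1]
  have hdD : derivative D = 0 := by
    rw [hD, derivative_sub, h, derivative_mul, derivative_C, derivative_pow, derivative_sub,
      derivative_X, derivative_C, Nat.add_sub_cancel]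
    push_cast
    linear_combination (-((X - C z₀)^n)) * hc
  have hDC := eq_C_of_derivative_eq_zero hdD
  refine ⟨c / ((n:ℂ)+1), D.coeff 0, ?_, by field_simp⟩
  rw [← hDC, hD]; ring

lemma dform (α β z₀ : ℂ) (n : ℕ) :
    derivative (C α * (X - C z₀) ^ (n+1) + C β) = C (α * ((n:ℂ)+1)) * (X - C z₀) ^ n := by
  rw [derivative_add, derivative_C, derivative_mul, derivative_C, derivative_pow,
    derivative_sub, derivative_X, derivative_C, Nat.add_sub_cancel]
  push_cast
  simp only [C_mul, C_add, C_1]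
  ring

lemma wform (α₁ β₁ α₂ β₂ z₀ : ℂ) (n : ℕ) :
    Wr (C α₁ * (X - C z₀) ^ (n+1) + C β₁) (C α₂ * (X - C z₀) ^ (n+1) + C β₂)
      = C (((n:ℂ)+1) * (α₁ * β₂ - α₂ * β₁)) * (X - C z₀) ^ n := by
  unfold Wr
  rw [dform, dform]
  simp only [C_mul, C_add, C_sub, C_1]
  ring

lemma form_ne_zero {α β z₀ : ℂ} {n : ℕ} (h : ¬(α = 0 ∧ β = 0)) :
    C α * (X - C z₀) ^ (n+1) + C β ≠ 0 := by
  intro h0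
  have hβ : β = 0 := by
    have := congrArg (fun p => p.eval z₀) h0
    simpa using this
  have hα : α = 0 := by
    rw [hβ, C_0, add_zero, mul_eq_zero] at h0
    rcases h0 with h0 | h0
    · exact C_eq_zero.mp h0
    · exact absurd h0 (pow_ne_zero _ (X_sub_C_ne_zero z₀))
  exact h ⟨hα, hβ⟩

lemma bwd (n : ℕ) (a : ℂ) (ha : a ≠ 0) (z₀ : ℂ)
    (α₁ α₂ β₁ β₂ : ℂ) (hdet : α₁ * β₂ - α₂ * β₁ = a / ((n : ℂ) + 1)) :
    (C α₁ * (X - C z₀) ^ (n + 1) + C β₁ ≠ 0 ∧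
     C α₂ * (X - C z₀) ^ (n + 1) + C β₂ ≠ 0 ∧
     Wr (C α₁ * (X - C z₀) ^ (n + 1) + C β₁) (C α₂ * (X - C z₀) ^ (n + 1) + C β₂)
       = C a * (X - C z₀) ^ n ∧
     IsCoprime (C α₁ * (X - C z₀) ^ (n + 1) + C β₁) (C α₂ * (X - C z₀) ^ (n + 1) + C β₂)) := by
  have hn1 : ((n:ℂ)+1) ≠ 0 := Nat.cast_add_one_ne_zero n
  have hd0 : α₁ * β₂ - α₂ * β₁ ≠ 0 := by rw [hdet]; exact div_ne_zero ha hn1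
  refine ⟨form_ne_zero ?_, form_ne_zero ?_, ?_, ?_⟩
  · rintro ⟨rfl, rfl⟩; apply hd0; ring
  · rintro ⟨rfl, rfl⟩; apply hd0; ring
  · rw [wform]
    congr 1
    rw [hdet]
    field_simp
  · refine ⟨C (-(α₂/(α₁ * β₂ - α₂ * β₁))), C (α₁/(α₁ * β₂ - α₂ * β₁)), ?_⟩
    have e1 : C (α₂/(α₁ * β₂ - α₂ * β₁)) * C α₁ = C (α₁/(α₁ * β₂ - α₂ * β₁)) * C α₂ := by
      rw [← C_mul, ← C_mul]; congr 1; ring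
    have e2 : C (α₁/(α₁ * β₂ - α₂ * β₁)) * C β₂ - C (α₂/(α₁ * β₂ - α₂ * β₁)) * C β₁ = 1 := by
      rw [← C_mul, ← C_mul, ← C_sub, ← C_1]
      congr 1
      field_simp
    simp only [C_neg]
    linear_combination (-((X - C z₀)^(n+1))) * e1 + e2

lemma solveP {z₀ : ℂ} {n : ℕ} {P : ℂ[X]}
    (hA : (X - C z₀) * derivative (derivative P) - C (n:ℂ) * derivative P = 0) :
    ∃ α β : ℂ, P = C α * (X - C z₀) ^ (n+1) + C β := by
  have : (X - C z₀) * derivative (derivative P) = C (n:ℂ) * derivative P :=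
    sub_eq_zero.mp hA
  obtain ⟨c, hc⟩ := ode this
  obtain ⟨α, β, hPf, -⟩ := integ hc
  exact ⟨α, β, hPf⟩

lemma Azero {z₀ : ℂ} {n : ℕ} {P : ℂ[X]} (hP : P ≠ 0)
    (hdvd : P ∣ ((X - C z₀) * derivative (derivative P) - C (n:ℂ) * derivative P)) :
    (X - C z₀) * derivative (derivative P) - C (n:ℂ) * derivative P = 0 := by
  set A := (X - C z₀) * derivative (derivative P) - C (n:ℂ) * derivative P with hA
  by_cases hA0 : A = 0
  · exact hA0
  by_cases hP' : derivative P = 0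
  · rw [hA, hP', derivative_zero, mul_zero, mul_zero, sub_zero] at hA0
    exact absurd rfl hA0
  exfalso
  apply hA0
  apply Polynomial.eq_zero_of_dvd_of_natDegree_lt hdvd
  have hdP : P.natDegree ≠ 0 := by
    intro h0
    exact hP' (by rw [Polynomial.eq_C_of_natDegree_eq_zero h0]; simp)
  have h2 : (derivative P).natDegree < P.natDegree := natDegree_derivative_lt hdP
  have hmax : A.natDegree ≤ max ((X - C z₀) * derivative (derivative P)).natDegree
      ((C (n:ℂ) * derivative P)).natDegree := natDegree_sub_le _ _
  have hb2 : (C (n:ℂ) * derivative P).natDegree < P.natDegree :=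
    lt_of_le_of_lt (natDegree_C_mul_le _ _) h2
  have hb1 : ((X - C z₀) * derivative (derivative P)).natDegree < P.natDegree := by
    by_cases hP'' : derivative (derivative P) = 0
    · rw [hP'', mul_zero, natDegree_zero]; omega
    · have hdP' : (derivative P).natDegree ≠ 0 := by
        intro h0
        exact hP'' (by rw [Polynomial.eq_C_of_natDegree_eq_zero h0]; simp)
      have h1 : (derivative (derivative P)).natDegree < (derivative P).natDegree :=
        natDegree_derivative_lt hdP'
      rw [natDegree_mul (X_sub_C_ne_zero z₀) hP'', natDegree_X_sub_C]
      omega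
  omega

lemma fwd (n : ℕ) (a : ℂ) (ha : a ≠ 0) (z₀ : ℂ) (P Q : ℂ[X])
    (hP0 : P ≠ 0) (hQ0 : Q ≠ 0) (hW : Wr P Q = C a * (X - C z₀) ^ n)
    (hcop : IsCoprime P Q) :
    ∃ α₁ α₂ β₁ β₂ : ℂ,
      P = C α₁ * (X - C z₀) ^ (n + 1) + C β₁ ∧
      Q = C α₂ * (X - C z₀) ^ (n + 1) + C β₂ ∧
      α₁ * β₂ - α₂ * β₁ = a / ((n : ℂ) + 1) := by
  have hn1 : ((n:ℂ)+1) ≠ 0 := Nat.cast_add_one_ne_zero n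
  have hW' : derivative P * Q - P * derivative Q = C a * (X - C z₀) ^ n := hW
  have hfid : (X - C z₀) * derivative (C a * (X - C z₀) ^ n)
      = C (n:ℂ) * (C a * (X - C z₀) ^ n) := by
    cases n with
    | zero => simp
    | succ m =>
      rw [derivative_mul, derivative_C, derivative_pow, derivative_sub, derivative_X,
        derivative_C, Nat.add_sub_cancel]
      push_cast
      ring
  have hder := congrArg derivative hW'
  simp only [derivative_sub, derivative_mul] at hder
  simp only [derivative_mul] at hfid
  have key : Q * ((X - C z₀) * derivative (derivative P) - C (n:ℂ) * derivative P)
      = P * ((X - C z₀) * derivative (derivative Q) - C (n:ℂ) * derivative Q) := by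
    linear_combination (X - C z₀) * hder - C (n:ℂ) * hW' + hfid
  have hdvdP : P ∣ ((X - C z₀) * derivative (derivative P) - C (n:ℂ) * derivative P) :=
    hcop.dvd_of_dvd_mul_left ⟨_, key⟩
  have hdvdQ : Q ∣ ((X - C z₀) * derivative (derivative Q) - C (n:ℂ) * derivative Q) :=
    hcop.symm.dvd_of_dvd_mul_left ⟨_, key.symm⟩
  obtain ⟨α₁, β₁, hPf⟩ := solveP (Azero hP0 hdvdP)
  obtain ⟨α₂, β₂, hQf⟩ := solveP (Azero hQ0 hdvdQ)
  refine ⟨α₁, α₂, β₁, β₂, hPf, hQf, ?_⟩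
  rw [hPf, hQf, wform] at hW
  have hpow : ((X - C z₀) ^ n : ℂ[X]) ≠ 0 := pow_ne_zero _ (X_sub_C_ne_zero z₀)
  have hCeq := mul_right_cancel₀ hpow hW
  have heq : ((n:ℂ)+1) * (α₁ * β₂ - α₂ * β₁) = a := C_injective hCeq
  field_simp
  linear_combination heq

/-- (P,Q) is a coprime Wronskian pair for a·(X − z₀)^n iff
P = α₁(X−z₀)^{n+1} + β₁, Q = α₂(X−z₀)^{n+1} + β₂ with α₁β₂ − α₂β₁ = a/(n+1). -/
theorem stmt10 (n : ℕ) (a : ℂ) (ha : a ≠ 0) (z₀ : ℂ) (f : Polynomial ℂ)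
    (hf : f = Polynomial.C a * (Polynomial.X - Polynomial.C z₀) ^ n)
    (P Q : Polynomial ℂ) :
    (P ≠ 0 ∧ Q ≠ 0 ∧ Wr P Q = f ∧ IsCoprime P Q) ↔
    ∃ α₁ α₂ β₁ β₂ : ℂ,
      P = Polynomial.C α₁ * (Polynomial.X - Polynomial.C z₀) ^ (n + 1) + Polynomial.C β₁ ∧
      Q = Polynomial.C α₂ * (Polynomial.X - Polynomial.C z₀) ^ (n + 1) + Polynomial.C β₂ ∧
      α₁ * β₂ - α₂ * β₁ = a / ((n : ℂ) + 1) := by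
  subst hf
  constructor
  · rintro ⟨hP0, hQ0, hW, hcop⟩
    exact fwd n a ha z₀ P Q hP0 hQ0 hW hcop
  · rintro ⟨α₁, α₂, β₁, β₂, hPf, hQf, hdet⟩
    obtain ⟨h1, h2, h3, h4⟩ := bwd n a ha z₀ α₁ α₂ β₁ β₂ hdet
    subst hPf hQf
    exact ⟨h1, h2, h3, h4⟩
end

section
/- Let a ∈ ℂ \ {0}, b, c ∈ ℂ and f := a·X² + b·X + c ∈ ℂ[X]. A pair (P,Q) of nonzero polynomials is a coprime Wronskian pair for f if and only if there exists a matrix Λ ∈ SL(2,ℂ) with P = Λ₁₁·P₀ + Λ₁₂·Q₀ and Q = Λ₂₁·P₀ + Λ₂₂·Q₀, where (P₀,Q₀) is one of the following: (i) P₀ = (a/3)·X³ + (b/2)·X² + c·X and Q₀ = 1 (for arbitrary a ≠ 0, b, c); or (ii) c ≠ b²/(4a) and P₀ = X² − c/a, Q₀ = a·X + b/2. -/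
open Polynomial

section SLTwo

variable {R : Type*} [CommRing R]

def IsSLTwoTransform (P Q P₀ Q₀ : R[X]) : Prop :=
  ∃ Λ : Matrix (Fin 2) (Fin 2) R, Λ.det = 1 ∧
    P = C (Λ 0 0) * P₀ + C (Λ 0 1) * Q₀ ∧ Q = C (Λ 1 0) * P₀ + C (Λ 1 1) * Q₀

namespace IsSLTwoTransform

theorem of_det {P Q P₀ Q₀ : R[X]} (u v w x : R) (hdet : u * x - v * w = 1)
    (hP : P = C u * P₀ + C v * Q₀) (hQ : Q = C w * P₀ + C x * Q₀) :
    IsSLTwoTransform P Q P₀ Q₀ :=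
  ⟨!![u, v; w, x], by rwa [Matrix.det_fin_two_of], hP, hQ⟩

theorem refl (P Q : R[X]) : IsSLTwoTransform P Q P Q :=
  of_det 1 0 0 1 (by ring) (by simp) (by simp)

theorem symm {P Q P₀ Q₀ : R[X]} (h : IsSLTwoTransform P Q P₀ Q₀) :
    IsSLTwoTransform P₀ Q₀ P Q := by
  obtain ⟨Λ, hΛ, hP, hQ⟩ := h
  rw [Matrix.det_fin_two] at hΛ
  have hΛC : C (Λ 0 0) * C (Λ 1 1) - C (Λ 0 1) * C (Λ 1 0) = (1 : R[X]) := by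
    simp only [← C_mul, ← C_sub, hΛ, C_1]
  refine of_det (Λ 1 1) (-Λ 0 1) (-Λ 1 0) (Λ 0 0) (by linear_combination hΛ) ?_ ?_
  · simp only [C_neg]; linear_combination (-P₀) * hΛC - C (Λ 1 1) * hP + C (Λ 0 1) * hQ
  · simp only [C_neg]; linear_combination (-Q₀) * hΛC + C (Λ 1 0) * hP - C (Λ 0 0) * hQ

theorem trans {P Q P₁ Q₁ P₀ Q₀ : R[X]} (h : IsSLTwoTransform P Q P₁ Q₁)
    (h₁ : IsSLTwoTransform P₁ Q₁ P₀ Q₀) : IsSLTwoTransform P Q P₀ Q₀ := by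
  obtain ⟨Λ, hΛ, hP, hQ⟩ := h
  obtain ⟨M, hM, hP₁, hQ₁⟩ := h₁
  refine ⟨Λ * M, by rw [Matrix.det_mul, hΛ, hM, one_mul], ?_, ?_⟩ <;>
  · simp only [Matrix.mul_apply, Fin.sum_univ_two, C_add, C_mul, hP, hQ, hP₁, hQ₁]
    ring

theorem isCoprime {P Q P₀ Q₀ : R[X]} (h : IsSLTwoTransform P Q P₀ Q₀)
    (h₀ : IsCoprime P₀ Q₀) : IsCoprime P Q := by
  obtain ⟨s, t, hst⟩ := h₀
  obtain ⟨Λ, -, hP, hQ⟩ := h.symm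
  exact ⟨s * C (Λ 0 0) + t * C (Λ 1 0), s * C (Λ 0 1) + t * C (Λ 1 1), by
    rw [← hst, hP, hQ]; ring⟩

theorem swap (P Q : R[X]) : IsSLTwoTransform P Q Q (-P) :=
  of_det 0 (-1) 1 0 (by ring) (by simp) (by simp)

theorem sub_C_mul (P Q : R[X]) (l : R) : IsSLTwoTransform P Q (P - C l * Q) Q :=
  of_det 1 l 0 1 (by ring) (by simp) (by simp)

end IsSLTwoTransform

end SLTwo

theorem ne_zero_and_ne_zero_of_wr_ne_zero {P Q : ℂ[X]} (h : Wr P Q ≠ 0) : P ≠ 0 ∧ Q ≠ 0 :=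
  ⟨by rintro rfl; simp [Wr] at h, by rintro rfl; simp [Wr] at h⟩

theorem wr_eq_wronskian (P Q : ℂ[X]) : Wr P Q = wronskian Q P := by
  rw [Wr, wronskian]; ring

theorem wr_swap (P Q : ℂ[X]) : Wr Q P = -Wr P Q := by
  rw [Wr, Wr]; ring

theorem wr_linear_combination (u v w x : ℂ) (P Q : ℂ[X]) :
    Wr (C u * P + C v * Q) (C w * P + C x * Q) = C (u * x - v * w) * Wr P Q := by
  simp only [Wr, derivative_add, derivative_C_mul, C_sub, C_mul]
  ring

theorem IsSLTwoTransform.wr_eq {P Q P₀ Q₀ : ℂ[X]} (h : IsSLTwoTransform P Q P₀ Q₀) :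
    Wr P Q = Wr P₀ Q₀ := by
  obtain ⟨Λ, hΛ, hP, hQ⟩ := h
  rw [hP, hQ, wr_linear_combination, ← Matrix.det_fin_two, hΛ, C_1, one_mul]

theorem derivative_wr (P Q : ℂ[X]) :
    derivative (Wr P Q) = derivative (derivative P) * Q - P * derivative (derivative Q) := by
  simp only [Wr, derivative_sub, derivative_mul]
  ring

theorem coeff_wr_natDegree_add_sub_one {P Q : ℂ[X]} (hlt : Q.natDegree < P.natDegree) :
    (Wr P Q).coeff (P.natDegree + Q.natDegree - 1) =
      ((P.natDegree : ℂ) - Q.natDegree) * P.leadingCoeff * Q.leadingCoeff := by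
  obtain ⟨k, hk⟩ : ∃ k, P.natDegree = k + 1 := ⟨_, (Nat.succ_pred_eq_of_pos (by omega)).symm⟩
  have hdP : (derivative P * Q).coeff (k + Q.natDegree) =
      (k + 1) * P.leadingCoeff * Q.leadingCoeff := by
    rw [coeff_mul_add_eq_of_natDegree_le (by have := natDegree_derivative_le P; omega) le_rfl,
      coeff_derivative, leadingCoeff, leadingCoeff, hk]
    ring
  have hdQ : (P * derivative Q).coeff (k + Q.natDegree) =
      Q.natDegree * P.leadingCoeff * Q.leadingCoeff := by
    obtain hQ0 | ⟨j, hj⟩ : Q.natDegree = 0 ∨ ∃ j, Q.natDegree = j + 1 :=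
      (Nat.eq_zero_or_eq_succ_pred _).imp_right fun h => ⟨_, h⟩
    · simp [derivative_of_natDegree_zero hQ0, hQ0]
    · rw [hj, show k + (j + 1) = (k + 1) + j by ring, coeff_mul_add_eq_of_natDegree_le
        (le_of_eq hk) (by have := natDegree_derivative_le Q; omega), coeff_derivative,
        leadingCoeff, leadingCoeff, hk, hj]
      push_cast
      ring
  rw [hk, show k + 1 + Q.natDegree - 1 = k + Q.natDegree by omega, Wr, coeff_sub, hdP, hdQ]
  push_cast
  ring

theorem coeff_wr_natDegree_add_sub_one_ne_zero {P Q : ℂ[X]} (hQ : Q ≠ 0)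
    (hlt : Q.natDegree < P.natDegree) :
    (Wr P Q).coeff (P.natDegree + Q.natDegree - 1) ≠ 0 := by
  have hP : P ≠ 0 := by rintro rfl; simp at hlt
  rw [coeff_wr_natDegree_add_sub_one hlt]
  refine mul_ne_zero (mul_ne_zero ?_ (leadingCoeff_ne_zero.mpr hP)) (leadingCoeff_ne_zero.mpr hQ)
  exact sub_ne_zero.mpr (by exact_mod_cast hlt.ne')

theorem natDegree_wr_of_natDegree_lt {P Q : ℂ[X]} (hQ : Q ≠ 0)
    (hlt : Q.natDegree < P.natDegree) :
    (Wr P Q).natDegree = P.natDegree + Q.natDegree - 1 := by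
  have hcoeff := coeff_wr_natDegree_add_sub_one_ne_zero hQ hlt
  have hW : wronskian Q P ≠ 0 := by
    rw [← wr_eq_wronskian]; exact fun h => hcoeff (by rw [h, coeff_zero])
  have hupper := natDegree_wronskian_lt_add hW
  have hlower := le_natDegree_of_ne_zero hcoeff
  rw [← wr_eq_wronskian] at hupper
  omega

theorem wr_ne_zero_of_natDegree_ne {P Q : ℂ[X]} (hP : P ≠ 0) (hQ : Q ≠ 0)
    (h : P.natDegree ≠ Q.natDegree) : Wr P Q ≠ 0 := by
  rcases h.lt_or_gt with hlt | hlt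
  · rw [← neg_ne_zero, ← wr_swap]
    exact fun h0 => coeff_wr_natDegree_add_sub_one_ne_zero hP hlt (by rw [h0, coeff_zero])
  · exact fun h0 => coeff_wr_natDegree_add_sub_one_ne_zero hQ hlt (by rw [h0, coeff_zero])

theorem exists_eq_C_mul_of_wr_eq_zero {R S : ℂ[X]} (hS : S ≠ 0) (h : Wr R S = 0) :
    ∃ t, R = C t * S := by
  set t := R.coeff S.natDegree / S.leadingCoeff
  refine ⟨t, sub_eq_zero.mp (by_contra fun hR₁ => ?_)⟩
  have hW₁ : Wr (R - C t * S) S = 0 := by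
    simp only [Wr, derivative_sub, derivative_C_mul] at h ⊢
    linear_combination h
  have hcoeff : (R - C t * S).coeff S.natDegree = 0 := by
    rw [coeff_sub, coeff_C_mul, ← leadingCoeff, div_mul_cancel₀ _ (leadingCoeff_ne_zero.mpr hS),
      sub_self]
  have hdeg : (R - C t * S).natDegree ≠ S.natDegree := fun hdeg =>
    leadingCoeff_ne_zero.mpr hR₁ (by rwa [leadingCoeff, hdeg])
  exact wr_ne_zero_of_natDegree_ne hR₁ hS hdeg hW₁

theorem IsSLTwoTransform.of_wr_eq {P Q P₀ Q₀ : ℂ[X]} {k : ℂ} (hQ₀ : Q₀ ≠ 0) (hk : k ≠ 0)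
    (hQ : Q = C k * Q₀) (hW : Wr P Q = Wr P₀ Q₀) : IsSLTwoTransform P Q P₀ Q₀ := by
  have hkC : C k⁻¹ * C k = (1 : ℂ[X]) := by rw [← C_mul, inv_mul_cancel₀ hk, C_1]
  obtain ⟨t, ht⟩ : ∃ t, P - C k⁻¹ * P₀ = C t * Q₀ := by
    refine exists_eq_C_mul_of_wr_eq_zero hQ₀ ?_
    simp only [Wr, hQ, derivative_sub, derivative_C_mul] at hW ⊢
    linear_combination C k⁻¹ * hW - (derivative P * Q₀ - P * derivative Q₀) * hkC
  exact .of_det k⁻¹ t 0 k (by simp [hk]) (by linear_combination ht) (by simp [hQ])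

theorem exists_isSLTwoTransform_natDegree_lt {P Q : ℂ[X]} (h : Wr P Q ≠ 0) :
    ∃ P₁ Q₁, IsSLTwoTransform P Q P₁ Q₁ ∧ Q₁.natDegree < P₁.natDegree := by
  obtain ⟨hP, hQ⟩ := ne_zero_and_ne_zero_of_wr_ne_zero h
  rcases lt_trichotomy Q.natDegree P.natDegree with hlt | heq | hgt
  · exact ⟨P, Q, .refl P Q, hlt⟩
  · set l := P.leadingCoeff / Q.leadingCoeff
    set P₁ := P - C l * Q
    have hP₁ : P₁ ≠ 0 := by
      rintro h₁
      rw [(IsSLTwoTransform.sub_C_mul P Q l).wr_eq] at h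
      exact h (by simp [P₁, h₁, Wr])
    have hlQ : (C l * Q).leadingCoeff = P.leadingCoeff := by
      rw [leadingCoeff_mul, leadingCoeff_C, div_mul_cancel₀ _ (leadingCoeff_ne_zero.mpr hQ)]
    have hl : l ≠ 0 := div_ne_zero (leadingCoeff_ne_zero.mpr hP) (leadingCoeff_ne_zero.mpr hQ)
    have hdeg : P.degree = (C l * Q).degree := by
      rw [degree_C_mul hl, degree_eq_natDegree hP, degree_eq_natDegree hQ, heq]
    have hlt : P₁.degree < Q.degree := by
      calc P₁.degree < P.degree := degree_sub_lt_left hdeg hP hlQ.symm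
        _ = Q.degree := by rw [hdeg, degree_C_mul hl]
    refine ⟨Q, -P₁, (IsSLTwoTransform.sub_C_mul P Q l).trans (.swap P₁ Q), ?_⟩
    rw [natDegree_neg]
    exact natDegree_lt_natDegree hP₁ hlt
  · exact ⟨Q, -P, .swap P Q, by rwa [natDegree_neg]⟩

theorem quadratic_ne_zero {a : ℂ} (ha : a ≠ 0) (b c : ℂ) : C a * X ^ 2 + C b * X + C c ≠ 0 :=
  fun h => by simpa [h] using natDegree_quadratic (b := b) (c := c) ha

theorem wr_cubic_one (a b c : ℂ) :
    Wr (C (a / 3) * X ^ 3 + C (b / 2) * X ^ 2 + C c * X) 1 = C a * X ^ 2 + C b * X + C c := by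
  simp only [Wr, derivative_one, derivative_add, derivative_C_mul, derivative_X_pow,
    derivative_X, mul_one, mul_zero, sub_zero]
  apply Polynomial.funext
  intro r
  simp
  ring

theorem wr_quadratic_linear {a : ℂ} (ha : a ≠ 0) (b c : ℂ) :
    Wr (X ^ 2 - C (c / a)) (C a * X + C (b / 2)) = C a * X ^ 2 + C b * X + C c := by
  simp only [Wr, derivative_sub, derivative_add, derivative_C_mul, derivative_X_pow,
    derivative_X, derivative_C, mul_one, sub_zero]
  apply Polynomial.funext
  intro r
  simp
  field_simp
  ring

theorem isCoprime_quadratic_linear_iff {a : ℂ} (ha : a ≠ 0) (b c : ℂ) :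
    IsCoprime (X ^ 2 - C (c / a)) (C a * X + C (b / 2)) ↔ c ≠ b ^ 2 / (4 * a) := by
  have hQ₀ : C a * X + C (b / 2) = C a * (X - C (-b / (2 * a))) := by
    have hr : a * (-b / (2 * a)) = -(b / 2) := by field_simp
    rw [mul_sub, ← C_mul, hr, C_neg, sub_neg_eq_add]
  rw [hQ₀, isCoprime_mul_unit_left_right (isUnit_C.mpr ha.isUnit), isCoprime_comm,
    (irreducible_X_sub_C _).coprime_iff_not_dvd, dvd_iff_isRoot, IsRoot.def]
  refine not_congr ⟨fun h => ?_, fun h => ?_⟩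
  · simp only [eval_sub, eval_pow, eval_X, eval_C] at h
    field_simp at h ⊢
    linear_combination -h
  · simp only [eval_sub, eval_pow, eval_X, eval_C]
    field_simp at h ⊢
    linear_combination -h

def IsNormalPair (a b c : ℂ) (P₀ Q₀ : ℂ[X]) : Prop :=
  (P₀ = C (a / 3) * X ^ 3 + C (b / 2) * X ^ 2 + C c * X ∧ Q₀ = 1) ∨
    (c ≠ b ^ 2 / (4 * a) ∧ P₀ = X ^ 2 - C (c / a) ∧ Q₀ = C a * X + C (b / 2))

namespace IsNormalPair

variable {a b c : ℂ} {P₀ Q₀ : ℂ[X]}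

theorem wr_eq (ha : a ≠ 0) (h : IsNormalPair a b c P₀ Q₀) :
    Wr P₀ Q₀ = C a * X ^ 2 + C b * X + C c := by
  rcases h with ⟨rfl, rfl⟩ | ⟨-, rfl, rfl⟩
  · exact wr_cubic_one a b c
  · exact wr_quadratic_linear ha b c

theorem isCoprime (ha : a ≠ 0) (h : IsNormalPair a b c P₀ Q₀) : IsCoprime P₀ Q₀ := by
  rcases h with ⟨-, rfl⟩ | ⟨hc, rfl, rfl⟩
  · exact isCoprime_one_right
  · exact (isCoprime_quadratic_linear_iff ha b c).mpr hc

end IsNormalPair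

theorem exists_isNormalPair_of_natDegree_eq_zero (a b c : ℂ) {P Q : ℂ[X]} (hQ : Q ≠ 0)
    (hQ0 : Q.natDegree = 0) (hW : Wr P Q = C a * X ^ 2 + C b * X + C c) :
    ∃ P₀ Q₀, IsNormalPair a b c P₀ Q₀ ∧ IsSLTwoTransform P Q P₀ Q₀ := by
  have hQC : Q = C (Q.coeff 0) * 1 := by rw [mul_one]; exact eq_C_of_natDegree_eq_zero hQ0
  have hk : Q.coeff 0 ≠ 0 := fun h => hQ (by rw [hQC, h, C_0, zero_mul])
  exact ⟨_, _, Or.inl ⟨rfl, rfl⟩,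
    .of_wr_eq one_ne_zero hk hQC (hW.trans (wr_cubic_one a b c).symm)⟩

theorem exists_isNormalPair_of_natDegree_eq_two_one {a : ℂ} (ha : a ≠ 0) (b c : ℂ)
    {P Q : ℂ[X]} (hP2 : P.natDegree = 2) (hQ1 : Q.natDegree = 1)
    (hW : Wr P Q = C a * X ^ 2 + C b * X + C c) (hco : IsCoprime P Q) :
    ∃ P₀ Q₀, IsNormalPair a b c P₀ Q₀ ∧ IsSLTwoTransform P Q P₀ Q₀ := by
  set Q₀ : ℂ[X] := C a * X + C (b / 2)
  have hQ₀ : Q₀ ≠ 0 := fun h => ha (by simpa [Q₀] using congrArg (coeff · 1) h)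
  obtain ⟨k, hP''⟩ : ∃ k, derivative (derivative P) = C k := by
    refine ⟨_, eq_C_of_natDegree_le_zero ?_⟩
    have := natDegree_derivative_le (derivative P)
    have := natDegree_derivative_le P
    omega
  have hQ'' : derivative (derivative Q) = 0 := by
    have := natDegree_derivative_le Q
    rw [derivative_of_natDegree_zero (by omega)]
  have hk : C k * Q = C 2 * Q₀ := by
    calc C k * Q = derivative (Wr P Q) := by rw [derivative_wr, hP'', hQ'', mul_zero, sub_zero]
      _ = C 2 * Q₀ := by
        rw [hW]
        apply Polynomial.funext
        intro r
        simp [Q₀]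
        ring
  have hk0 : k ≠ 0 := by
    rintro rfl
    exact hQ₀ (by simpa using hk.symm)
  have hQ : Q = C (2 / k) * Q₀ := by
    calc Q = C k⁻¹ * (C k * Q) := by rw [← mul_assoc, ← C_mul, inv_mul_cancel₀ hk0, C_1, one_mul]
      _ = C (2 / k) * Q₀ := by rw [hk, ← mul_assoc, ← C_mul, div_eq_inv_mul]
  have hT : IsSLTwoTransform P Q (X ^ 2 - C (c / a)) Q₀ :=
    .of_wr_eq hQ₀ (div_ne_zero two_ne_zero hk0) hQ (hW.trans (wr_quadratic_linear ha b c).symm)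
  have hc : c ≠ b ^ 2 / (4 * a) :=
    (isCoprime_quadratic_linear_iff ha b c).mp (hT.symm.isCoprime hco)
  exact ⟨_, _, Or.inr ⟨hc, rfl, rfl⟩, hT⟩

theorem exists_isNormalPair_of_wr_eq {a : ℂ} (ha : a ≠ 0) (b c : ℂ) {P Q : ℂ[X]}
    (hW : Wr P Q = C a * X ^ 2 + C b * X + C c) (hco : IsCoprime P Q) :
    ∃ P₀ Q₀, IsNormalPair a b c P₀ Q₀ ∧ IsSLTwoTransform P Q P₀ Q₀ := by
  obtain ⟨P₁, Q₁, hT, hlt⟩ :=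
    exists_isSLTwoTransform_natDegree_lt (hW ▸ quadratic_ne_zero ha b c)
  have hW₁ : Wr P₁ Q₁ = C a * X ^ 2 + C b * X + C c := hT.wr_eq ▸ hW
  have hQ₁ : Q₁ ≠ 0 := (ne_zero_and_ne_zero_of_wr_ne_zero (hW₁ ▸ quadratic_ne_zero ha b c)).2
  have hdeg : P₁.natDegree + Q₁.natDegree - 1 = 2 := by
    rw [← natDegree_wr_of_natDegree_lt hQ₁ hlt, hW₁, natDegree_quadratic ha]
  obtain ⟨P₀, Q₀, hN, hT₁⟩ : ∃ P₀ Q₀, IsNormalPair a b c P₀ Q₀ ∧ IsSLTwoTransform P₁ Q₁ P₀ Q₀ := by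
    obtain hQ0 | ⟨hP2, hQ1⟩ : Q₁.natDegree = 0 ∨ P₁.natDegree = 2 ∧ Q₁.natDegree = 1 := by omega
    · exact exists_isNormalPair_of_natDegree_eq_zero a b c hQ₁ hQ0 hW₁
    · exact exists_isNormalPair_of_natDegree_eq_two_one ha b c hP2 hQ1 hW₁
        (hT.symm.isCoprime hco)
  exact ⟨P₀, Q₀, hN, hT.trans hT₁⟩

/-- classification of coprime Wronskian pairs for a quadratic
f = a·X² + b·X + c (a ≠ 0): (P,Q) is a coprime Wronskian pair for f iff
(P,Q) = Λ(P₀,Q₀) for some Λ ∈ SL(2,ℂ), where (P₀,Q₀) is either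
(i) ((a/3)X³ + (b/2)X² + cX, 1), or
(ii) (X² − c/a, aX + b/2) provided c ≠ b²/(4a). -/
theorem stmt11 (a : ℂ) (ha : a ≠ 0) (b c : ℂ) (f : Polynomial ℂ)
    (hf : f = Polynomial.C a * Polynomial.X ^ 2 + Polynomial.C b * Polynomial.X +
      Polynomial.C c)
    (P Q : Polynomial ℂ) :
    (P ≠ 0 ∧ Q ≠ 0 ∧ Wr P Q = f ∧ IsCoprime P Q) ↔
    ∃ Λ : Matrix (Fin 2) (Fin 2) ℂ, Λ.det = 1 ∧
      ∃ P₀ Q₀ : Polynomial ℂ,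
        ((P₀ = Polynomial.C (a / 3) * Polynomial.X ^ 3 +
            Polynomial.C (b / 2) * Polynomial.X ^ 2 + Polynomial.C c * Polynomial.X ∧
          Q₀ = 1) ∨
         (c ≠ b ^ 2 / (4 * a) ∧
          P₀ = Polynomial.X ^ 2 - Polynomial.C (c / a) ∧
          Q₀ = Polynomial.C a * Polynomial.X + Polynomial.C (b / 2))) ∧
        P = Polynomial.C (Λ 0 0) * P₀ + Polynomial.C (Λ 0 1) * Q₀ ∧
        Q = Polynomial.C (Λ 1 0) * P₀ + Polynomial.C (Λ 1 1) * Q₀ := by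
  subst hf
  constructor
  · rintro ⟨-, -, hW, hco⟩
    obtain ⟨P₀, Q₀, hN, Λ, hΛ, hP, hQ⟩ := exists_isNormalPair_of_wr_eq ha b c hW hco
    exact ⟨Λ, hΛ, P₀, Q₀, hN, hP, hQ⟩
  · rintro ⟨Λ, hΛ, P₀, Q₀, hN, hP, hQ⟩
    replace hN : IsNormalPair a b c P₀ Q₀ := hN
    have hT : IsSLTwoTransform P Q P₀ Q₀ := ⟨Λ, hΛ, hP, hQ⟩
    have hW := hT.wr_eq.trans (hN.wr_eq ha)
    obtain ⟨hP0, hQ0⟩ := ne_zero_and_ne_zero_of_wr_ne_zero (hW ▸ quadratic_ne_zero ha b c)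
    exact ⟨hP0, hQ0, hW, hT.isCoprime (hN.isCoprime ha)⟩
end

section
/- Let f ∈ L¹(ℝ²;ℝ) ∩ L^p(ℝ²;ℝ) for some p > 1. Then for every x ∈ ℝ² the integral defining Φ[f](x) converges absolutely, and lim_{|x| → ∞} Φ[f](x)/log|x| = ∫_{ℝ²} f. -/
/-!
Split the kernel as `log ‖x - y‖ - log (‖y‖ + 1) = regularKernel x y - log⁺ ‖x - y‖⁻¹`.

The regular part is bounded by `log (‖x‖ + 2)` and, for fixed `y`, equals `log ‖x‖ + O_y(1)`, so
dominated convergence against `f ∈ L¹` gives `∫ regularKernel x y / log ‖x‖ * f y → ∫ f`.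

The singular part `log⁺ ‖z‖⁻¹` lies in every `L^q` with `q < ∞`; Hölder's inequality with the
exponent conjugate to `p > 1` bounds its convolution with `f` uniformly in `x`, so that term
vanishes after division by `log ‖x‖`.
-/

open MeasureTheory Filter
open scoped ENNReal

/-- The superpotential Φ[f](x) = ∫ (log|x−y| − log(|y|+1)) f(y) dy. -/
noncomputable def Phi (f : ℂ → ℝ) (x : ℂ) : ℝ :=
  ∫ y : ℂ, (Real.log ‖x - y‖ - Real.log (‖y‖ + 1)) * f y

open Real Metric Topology

lemma posLog_inv_le_rpow_div {r ε : ℝ} (hr : 0 ≤ r) (hε : 0 < ε) :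
    log⁺ r⁻¹ ≤ r ^ (-ε) / ε := by
  rw [posLog_apply, rpow_neg hr, ← inv_rpow hr]
  exact max_le (by positivity) (log_le_rpow_div (inv_nonneg.2 hr) hε)

section LogSingularity

variable {E : Type*} [NormedAddCommGroup E] [NormedSpace ℝ E] [FiniteDimensional ℝ E]
  [MeasurableSpace E] [BorelSpace E] {μ : Measure E} [μ.IsAddHaarMeasure]

theorem memLp_posLog_norm_inv (hd : 1 ≤ Module.finrank ℝ E) {q : ℝ≥0∞} (hq : q ≠ ∞) :
    MemLp (fun z : E => log⁺ ‖z‖⁻¹) q μ := by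
  have hmeas : Measurable (fun z : E => log⁺ ‖z‖⁻¹) :=
    continuous_posLog.measurable.comp measurable_norm.inv
  rcases eq_or_ne q 0 with rfl | hq0
  · exact memLp_zero_iff_aestronglyMeasurable.2 hmeas.aestronglyMeasurable
  rw [← integrable_norm_rpow_iff hmeas.aestronglyMeasurable hq0 hq]
  set s := q.toReal
  have hs : 0 < s := ENNReal.toReal_pos hq0 hq
  have hsupp : Function.support (fun z : E => ‖log⁺ ‖z‖⁻¹‖ ^ s) ⊆ ball 0 1 := by
    intro z hz
    contrapose! hz
    rw [mem_ball_zero_iff, not_lt] at hz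
    have : log⁺ ‖z‖⁻¹ = 0 := by
      rw [posLog_eq_zero_iff, abs_of_nonneg (by positivity)]
      exact inv_le_one_of_one_le₀ hz
    simp [this, zero_rpow hs.ne']
  refine (integrableOn_iff_integrable_of_support_subset hsupp).1 ?_
  -- `log⁺ r⁻¹ ≤ r ^ (-ε) / ε` with `ε = (2 s)⁻¹` bounds the `s`-th power by `C r ^ (-1/2)`,
  -- which is integrable near `0` in every dimension `≥ 1`.
  have hd' : (1 : ℝ) ≤ Module.finrank ℝ E := by exact_mod_cast hd
  refine integrableOn_ball_of_norm_le_rpow hd (C := (2 * s) ^ s) (α := 1 / 2) (by linarith)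
    (Eventually.of_forall fun z => ?_) (hmeas.norm.pow_const s).aestronglyMeasurable
  have hε : 0 < (2 * s)⁻¹ := by positivity
  calc ‖‖log⁺ ‖z‖⁻¹‖ ^ s‖ = log⁺ ‖z‖⁻¹ ^ s := by
        rw [Real.norm_of_nonneg (by positivity), Real.norm_of_nonneg posLog_nonneg]
    _ ≤ (‖z‖ ^ (-(2 * s)⁻¹) / (2 * s)⁻¹) ^ s :=
        rpow_le_rpow posLog_nonneg (posLog_inv_le_rpow_div (norm_nonneg z) hε) hs.le
    _ = (2 * s) ^ s * ‖z‖ ^ (-(1 / 2 : ℝ)) := by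
        rw [div_rpow (by positivity) hε.le, ← rpow_mul (norm_nonneg z), inv_rpow (by positivity),
          div_inv_eq_mul, mul_comm]
        congr 2
        field_simp

end LogSingularity

section HolderTranslate

variable {G : Type*} [AddGroup G] [MeasurableSpace G] [MeasurableAdd G] [MeasurableNeg G]
  {μ : Measure G} [μ.IsAddLeftInvariant] [μ.IsNegInvariant]
  {p q : ℝ≥0∞} [p.HolderConjugate q] {g f : G → ℝ}

theorem MeasureTheory.MemLp.integrable_comp_sub_mul (hg : MemLp g q μ) (hf : MemLp f p μ)
    (x : G) :
    Integrable (fun y => g (x - y) * f y) μ :=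
  memLp_one_iff_integrable.1 <|
    hf.mul' (hg.comp_measurePreserving (Measure.measurePreserving_sub_left μ x))

theorem abs_integral_comp_sub_mul_le (hg : MemLp g q μ) (hf : MemLp f p μ) (x : G) :
    |∫ y, g (x - y) * f y ∂μ| ≤ (eLpNorm g q μ * eLpNorm f p μ).toReal := by
  have hx := Measure.measurePreserving_sub_left μ x
  have hHolder : eLpNorm (fun y => g (x - y) * f y) 1 μ ≤ eLpNorm g q μ * eLpNorm f p μ := by
    rw [← eLpNorm_comp_measurePreserving hg.1 hx]
    exact eLpNorm_smul_le_mul_eLpNorm (p := q) (q := p) (r := 1) (φ := g ∘ (x - ·)) hf.1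
      (hg.1.comp_measurePreserving hx)
  rw [← Real.norm_eq_abs, ← toReal_enorm]
  refine ENNReal.toReal_mono (ENNReal.mul_ne_top hg.eLpNorm_ne_top hf.eLpNorm_ne_top) ?_
  calc ‖∫ y, g (x - y) * f y ∂μ‖ₑ ≤ ∫⁻ y, ‖g (x - y) * f y‖ₑ ∂μ :=
        enorm_integral_le_lintegral_enorm _
    _ = eLpNorm (fun y => g (x - y) * f y) 1 μ := eLpNorm_one_eq_lintegral_enorm.symm
    _ ≤ _ := hHolder

end HolderTranslate

lemma log_sub_log_le_of_le_mul {a b c : ℝ} (ha : 0 < a) (hb : 0 < b) (hc : 0 < c)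
    (h : a ≤ c * b) : log a - log b ≤ log c := by
  rw [sub_le_iff_le_add, ← log_mul hc.ne' hb.ne']
  exact log_le_log ha h

section RegularKernel

variable {E : Type*} [SeminormedAddCommGroup E]

noncomputable def regularKernel (x y : E) : ℝ := log⁺ ‖x - y‖ - log (‖y‖ + 1)

lemma log_norm_sub_sub_log_eq (x y : E) :
    log ‖x - y‖ - log (‖y‖ + 1) = regularKernel x y - log⁺ ‖x - y‖⁻¹ := by
  rw [regularKernel, ← posLog_sub_posLog_inv]
  ring

lemma abs_regularKernel_le (x y : E) : |regularKernel x y| ≤ log (‖x‖ + 2) := by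
  have hy : ‖y‖ ≤ ‖x‖ + ‖x - y‖ := by simpa using norm_sub_le x (x - y)
  have hxy : ‖x - y‖ ≤ ‖x‖ + ‖y‖ := norm_sub_le x y
  have hlog_y : 0 ≤ log (‖y‖ + 1) := log_nonneg (by linarith [norm_nonneg y])
  rcases lt_or_ge ‖x - y‖ 1 with hnear | hfar
  · rw [regularKernel, (posLog_eq_zero_iff _).2 (by rw [abs_norm]; exact hnear.le), zero_sub,
      abs_neg, abs_of_nonneg hlog_y]
    exact log_le_log (by positivity) (by linarith)
  · rw [regularKernel, posLog_eq_log (by rw [abs_norm]; exact hfar), abs_sub_le_iff]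
    constructor
    · exact log_sub_log_le_of_le_mul (by linarith) (by positivity) (by positivity)
        (by nlinarith [norm_nonneg x, norm_nonneg y])
    · exact log_sub_log_le_of_le_mul (by positivity) (by linarith) (by positivity)
        (by nlinarith [norm_nonneg x])

lemma abs_regularKernel_sub_log_le {x y : E} (hx : 2 * ‖y‖ + 2 ≤ ‖x‖) :
    |regularKernel x y - log ‖x‖| ≤ log 2 + log (‖y‖ + 1) := by
  have hxy : ‖x - y‖ ≤ ‖x‖ + ‖y‖ := norm_sub_le x y
  have hxy' : ‖x‖ - ‖y‖ ≤ ‖x - y‖ := norm_sub_norm_le x y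
  have hfar : 1 ≤ ‖x - y‖ := by linarith [norm_nonneg y]
  have hlog_y : 0 ≤ log (‖y‖ + 1) := log_nonneg (by linarith [norm_nonneg y])
  have hsub : |log ‖x - y‖ - log ‖x‖| ≤ log 2 := by
    rw [abs_sub_le_iff]
    constructor
    · exact log_sub_log_le_of_le_mul (by linarith) (by linarith) two_pos (by linarith)
    · exact log_sub_log_le_of_le_mul (by linarith) (by linarith) two_pos (by linarith)
  rw [regularKernel, posLog_eq_log (by rw [abs_norm]; exact hfar)]
  calc |log ‖x - y‖ - log (‖y‖ + 1) - log ‖x‖|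
      ≤ |log ‖x - y‖ - log ‖x‖| + |log (‖y‖ + 1)| := by
        rw [sub_right_comm]; exact abs_sub _ _
    _ ≤ log 2 + log (‖y‖ + 1) := by rw [abs_of_nonneg hlog_y]; linarith

lemma abs_regularKernel_div_log_le {x : E} (hx : 2 ≤ ‖x‖) (y : E) :
    |regularKernel x y / log ‖x‖| ≤ 2 := by
  have hlog : 0 < log ‖x‖ := log_pos (by linarith)
  rw [abs_div, abs_of_pos hlog, div_le_iff₀ hlog]
  calc |regularKernel x y| ≤ log (‖x‖ + 2) := abs_regularKernel_le x y
    _ ≤ log (‖x‖ ^ 2) := log_le_log (by positivity) (by nlinarith)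
    _ = 2 * log ‖x‖ := by rw [log_pow]; norm_num

lemma tendsto_div_log_norm_of_abs_le {u : E → ℝ} {C : ℝ}
    (hu : ∀ᶠ x in comap norm atTop, |u x| ≤ C) :
    Tendsto (fun x => u x / log ‖x‖) (comap norm atTop) (𝓝 0) := by
  have hlog : Tendsto (fun x : E => log ‖x‖) (comap norm atTop) atTop :=
    tendsto_log_atTop.comp tendsto_comap
  simpa only [div_eq_mul_inv, Function.comp_def] using isBoundedUnder_le_mul_tendsto_zero
    (isBoundedUnder_of_eventually_le (a := C) hu) (tendsto_inv_atTop_zero.comp hlog)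

lemma tendsto_regularKernel_div_log (y : E) :
    Tendsto (fun x => regularKernel x y / log ‖x‖) (comap norm atTop) (𝓝 1) := by
  have hbound : ∀ᶠ x in comap norm atTop, |regularKernel x y - log ‖x‖| ≤ log 2 + log (‖y‖ + 1) :=
    (tendsto_comap.eventually (eventually_ge_atTop _)).mono fun x hx =>
      abs_regularKernel_sub_log_le hx
  have hne : ∀ᶠ x in comap norm atTop, 1 + (regularKernel x y - log ‖x‖) / log ‖x‖ =
      regularKernel x y / log ‖x‖ :=
    (tendsto_comap.eventually (eventually_gt_atTop 1)).mono fun x hx => by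
      field_simp [(log_pos hx).ne']
      ring
  simpa using ((tendsto_div_log_norm_of_abs_le hbound).const_add 1).congr' hne

variable [MeasurableSpace E] [OpensMeasurableSpace E] {μ : Measure E} {f : E → ℝ}

lemma measurable_regularKernel (x : E) : Measurable (regularKernel x) := by
  unfold regularKernel
  exact (continuous_posLog.comp (continuous_const.sub continuous_id).norm).measurable.sub
    (by fun_prop)

lemma integrable_regularKernel_mul (hf : Integrable f μ) (x : E) :
    Integrable (fun y => regularKernel x y * f y) μ :=
  hf.bdd_mul (measurable_regularKernel x).aestronglyMeasurable
    (Eventually.of_forall fun y => abs_regularKernel_le x y)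

theorem tendsto_integral_regularKernel_div_log_mul (hf : Integrable f μ) :
    Tendsto (fun x => ∫ y, regularKernel x y / log ‖x‖ * f y ∂μ) (comap norm atTop)
      (𝓝 (∫ y, f y ∂μ)) := by
  refine tendsto_integral_filter_of_dominated_convergence (fun y => 2 * ‖f y‖)
    (Eventually.of_forall fun x =>
      ((measurable_regularKernel x).div_const _).aestronglyMeasurable.mul hf.1)
    ((tendsto_comap.eventually (eventually_ge_atTop 2)).mono fun x hx =>
      Eventually.of_forall fun y => ?_)
    (hf.norm.const_mul 2)
    (Eventually.of_forall fun y => by simpa using (tendsto_regularKernel_div_log y).mul_const (f y))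
  rw [norm_mul, Real.norm_eq_abs]
  exact mul_le_mul_of_nonneg_right (abs_regularKernel_div_log_le hx y) (norm_nonneg _)

end RegularKernel

/-- "Newton's lemma": if f ∈ L¹ ∩ L^p(ℝ²;ℝ) for some p > 1, then the
integral defining Φ[f](x) converges absolutely for every x, and
Φ[f](x)/log|x| → ∫ f as |x| → ∞. -/
theorem stmt15 (f : ℂ → ℝ) (p : ℝ≥0∞) (hp : 1 < p)
    (hf1 : Integrable f) (hfp : MemLp f p volume) :
    (∀ x : ℂ,
      Integrable (fun y : ℂ => (Real.log ‖x - y‖ - Real.log (‖y‖ + 1)) * f y)) ∧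
    Tendsto (fun x : ℂ => Phi f x / Real.log ‖x‖)
      (Filter.comap (fun x : ℂ => ‖x‖) Filter.atTop) (nhds (∫ y : ℂ, f y)) := by
  have hpq : p.HolderConjugate p.conjExponent := .conjExponent hp.le
  have hq : p.conjExponent ≠ ∞ := ((ENNReal.HolderConjugate.lt_top_iff_one_lt _ p).2 hp).ne
  have hg : MemLp (fun z : ℂ => log⁺ ‖z‖⁻¹) p.conjExponent :=
    memLp_posLog_norm_inv (by simp) hq
  have hsing := hg.integrable_comp_sub_mul hfp
  have hreg := integrable_regularKernel_mul hf1
  have hkernel (x : ℂ) : (fun y => (log ‖x - y‖ - log (‖y‖ + 1)) * f y) =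
      fun y => regularKernel x y * f y - log⁺ ‖x - y‖⁻¹ * f y := by
    simp_rw [log_norm_sub_sub_log_eq, sub_mul]
  refine ⟨fun x => hkernel x ▸ (hreg x).sub (hsing x), ?_⟩
  have hPhi (x : ℂ) : Phi f x / log ‖x‖ = (∫ y, regularKernel x y / log ‖x‖ * f y) -
      (∫ y, log⁺ ‖x - y‖⁻¹ * f y) / log ‖x‖ := by
    rw [Phi, hkernel, integral_sub (hreg x) (hsing x), sub_div, ← integral_div]
    simp_rw [div_mul_eq_mul_div]
  simpa [hPhi] using (tendsto_integral_regularKernel_div_log_mul hf1).sub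
    (tendsto_div_log_norm_of_abs_le (.of_forall (abs_integral_comp_sub_mul_le hg hfp)))
end
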